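/- arXiv:1801.05451 — 9 statements merged into one kernel-verified Lean document; each statement's English description precedes it below -/
import Mathlib

section
/- Let A be a *-algebra and ω an algebraic state on A. Then ω is multiplicative if and only if Var_ω(a²) = 0 holds for all Hermitian elements a of A. -/
open ComplexOrder

section Defs

variable {A : Type*} [Ring A] [Algebra ℂ A] [StarRing A] [StarModule ℂ A]

/-- A linear functional is algebraically positive if `ω (a* a) ≥ 0` for all `a`. -/
def AlgPositive (ω : A →ₗ[ℂ] ℂ) : Prop := ∀ a : A, 0 ≤ ω (star a * a)

/-- An algebraic state is an algebraically positive linear functional with `ω 1 = 1`. -/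
def AlgState (ω : A →ₗ[ℂ] ℂ) : Prop := AlgPositive ω ∧ ω 1 = 1

/-- The variance `Var_ω(a) = ω(a* a) - |ω a|²`. -/
noncomputable def Var (ω : A →ₗ[ℂ] ℂ) (a : A) : ℂ :=
  ω (star a * a) - (Complex.normSq (ω a) : ℂ)

end Defs

section Aux

variable {A : Type*} [Ring A] [Algebra ℂ A] [StarRing A] [StarModule ℂ A]

private lemma im_eq_zero' {z : ℂ} (h : 0 ≤ z) : z.im = 0 := (Complex.le_def.mp h).2.symm

private lemma conj_eq_of_nonneg {z : ℂ} (h : 0 ≤ z) : (starRingEnd ℂ) z = z := by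
  rw [Complex.conj_eq_iff_im]; exact im_eq_zero' h

private lemma expand_aux (ω : A →ₗ[ℂ] ℂ) (x y : A) (c : ℂ) :
    ω (star (x + c • y) * (x + c • y)) =
      ω (star x * x) + c * ω (star x * y) + (starRingEnd ℂ) c * ω (star y * x)
        + ((starRingEnd ℂ) c * c) * ω (star y * y) := by
  simp only [star_add, star_smul, add_mul, mul_add, smul_mul_assoc, mul_smul_comm, smul_smul,
    map_add, map_smul, smul_eq_mul, Complex.star_def]
  ring

private lemma conj_symm (ω : A →ₗ[ℂ] ℂ) (hp : AlgPositive ω) (x y : A) :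
    ω (star y * x) = (starRingEnd ℂ) (ω (star x * y)) := by
  have hP := im_eq_zero' (hp x)
  have hQ := im_eq_zero' (hp y)
  have h1 := im_eq_zero' (hp (x + (1 : ℂ) • y))
  have h2 := im_eq_zero' (hp (x + Complex.I • y))
  rw [expand_aux] at h1 h2
  simp only [map_one, one_mul, Complex.conj_I, Complex.add_im, Complex.mul_im,
    Complex.I_re, Complex.I_im, Complex.one_re, Complex.one_im, Complex.neg_re,
    Complex.neg_im, neg_mul, neg_neg, hP, hQ] at h1 h2
  apply Complex.ext
  · simp only [Complex.conj_re]; linarith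
  · simp only [Complex.conj_im]; linarith

private lemma degenerate (ω : A →ₗ[ℂ] ℂ) (hp : AlgPositive ω) {c : A}
    (hc : ω (star c * c) = 0) (x : A) : ω (star x * c) = 0 := by
  by_contra hne
  set u := ω (star x * c) with hu
  have hv : ω (star c * x) = (starRingEnd ℂ) u := conj_symm ω hp x c
  set P := ω (star x * x) with hPdef
  have hPre : 0 ≤ P.re := (Complex.le_def.mp (hp x)).1
  have hnsq : 0 < Complex.normSq u := Complex.normSq_pos.mpr hne
  set t : ℝ := (P.re + 1) / (2 * Complex.normSq u) with ht
  have h := hp (x + (-(t : ℂ) * (starRingEnd ℂ) u) • c)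
  rw [expand_aux, hc, hv, ← hu, ← hPdef] at h
  have hrw : P + -(t : ℂ) * (starRingEnd ℂ) u * u
      + (starRingEnd ℂ) (-(t : ℂ) * (starRingEnd ℂ) u) * (starRingEnd ℂ) u
      + ((starRingEnd ℂ) (-(t : ℂ) * (starRingEnd ℂ) u) * (-(t : ℂ) * (starRingEnd ℂ) u)) * 0
      = P - ((2 * t * Complex.normSq u : ℝ) : ℂ) := by
    have hns : ((Complex.normSq u : ℝ) : ℂ) = (starRingEnd ℂ) u * u :=
      Complex.normSq_eq_conj_mul_self
    simp only [map_mul, map_neg, Complex.conj_conj, Complex.conj_ofReal]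
    push_cast
    rw [hns]
    ring
  rw [hrw] at h
  have hre : (0 : ℝ) ≤ P.re - 2 * t * Complex.normSq u := by
    have := (Complex.le_def.mp h).1
    simpa using this
  have h2t : 2 * t * Complex.normSq u = P.re + 1 := by
    rw [ht]; field_simp
  rw [h2t] at hre
  linarith

private lemma herm_real (ω : A →ₗ[ℂ] ℂ) (hp : AlgPositive ω) {a : A}
    (ha : IsSelfAdjoint a) : (starRingEnd ℂ) (ω a) = ω a := by
  have h := conj_symm ω hp a 1
  simp only [star_one, one_mul, mul_one, ha.star_eq] at h
  exact h.symm

private lemma quartic (ω : A →ₗ[ℂ] ℂ) (hω : AlgState ω)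
    (H : ∀ a : A, IsSelfAdjoint a → Var ω (a ^ 2) = 0) {c : A} (hc : IsSelfAdjoint c) :
    ω (c ^ 4) = ω (c ^ 2) ^ 2 := by
  have h := H c hc
  unfold Var at h
  have hst : star (c ^ 2) = c ^ 2 := (hc.pow 2).star_eq
  have hpos : 0 ≤ ω (c ^ 2) := by
    have := hω.1 c
    rwa [hc.star_eq, ← sq] at this
  have hr : (starRingEnd ℂ) (ω (c ^ 2)) = ω (c ^ 2) := conj_eq_of_nonneg hpos
  rw [hst] at h
  have h' : ω (c ^ 2 * c ^ 2) = (Complex.normSq (ω (c ^ 2)) : ℂ) := sub_eq_zero.mp h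
  rw [Complex.normSq_eq_conj_mul_self, hr] at h'
  have h4 : c ^ 4 = c ^ 2 * c ^ 2 := by rw [← pow_add]
  rw [h4, h']; ring

private lemma sq_mean (ω : A →ₗ[ℂ] ℂ) (hω : AlgState ω)
    (H : ∀ a : A, IsSelfAdjoint a → Var ω (a ^ 2) = 0) {a : A} (ha : IsSelfAdjoint a) :
    ω (a * a) = ω a * ω a := by
  have q0 := quartic ω hω H ha
  have q1 := quartic ω hω H (ha.add (IsSelfAdjoint.one A))
  have q2 := quartic ω hω H (ha.sub (IsSelfAdjoint.one A))
  have e2p : (a + 1) ^ 2 = a ^ 2 + (a + a) + 1 := by noncomm_ring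
  have e4p : (a + 1) ^ 4 = a ^ 4 + (a ^ 3 + a ^ 3 + a ^ 3 + a ^ 3)
      + (a ^ 2 + a ^ 2 + a ^ 2 + a ^ 2 + a ^ 2 + a ^ 2) + (a + a + a + a) + 1 := by
    noncomm_ring
  have e2m : (a - 1) ^ 2 = a ^ 2 - (a + a) + 1 := by noncomm_ring
  have e4m : (a - 1) ^ 4 = a ^ 4 - (a ^ 3 + a ^ 3 + a ^ 3 + a ^ 3)
      + (a ^ 2 + a ^ 2 + a ^ 2 + a ^ 2 + a ^ 2 + a ^ 2) - (a + a + a + a) + 1 := by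
    noncomm_ring
  rw [e2p, e4p] at q1
  rw [e2m, e4m] at q2
  simp only [map_add, map_sub, hω.2] at q1 q2
  have hsq : a * a = a ^ 2 := (sq a).symm
  rw [hsq]
  linear_combination (q1 + q2 - 2 * q0) / 8

private lemma mult_herm (ω : A →ₗ[ℂ] ℂ) (hω : AlgState ω)
    (H : ∀ a : A, IsSelfAdjoint a → Var ω (a ^ 2) = 0) {a : A} (ha : IsSelfAdjoint a)
    (x : A) : ω (x * a) = ω x * ω a := by
  have hreal : (starRingEnd ℂ) (ω a) = ω a := herm_real ω hω.1 ha
  obtain ⟨c, hcdef⟩ : ∃ c : A, c = a - ω a • 1 := ⟨_, rfl⟩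
  have hsc : star c = c := by
    rw [hcdef, star_sub, star_smul, star_one, ha.star_eq, Complex.star_def, hreal]
  have hcexp : c * c = a * a - ω a • a - ω a • a + (ω a * ω a) • (1 : A) := by
    rw [hcdef]
    simp only [sub_mul, mul_sub, smul_mul_assoc, mul_smul_comm, smul_sub, smul_smul,
      one_mul, mul_one]
    module
  have hcc : ω (star c * c) = 0 := by
    rw [hsc, hcexp]
    simp only [map_add, map_sub, map_smul, smul_eq_mul, hω.2, mul_one]
    rw [sq_mean ω hω H ha]
    ring
  have h0 := degenerate ω hω.1 hcc (star x)
  rw [star_star] at h0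
  have hx : x * c = x * a - ω a • x := by
    rw [hcdef]
    simp only [mul_sub, mul_smul_comm, mul_one]
  rw [hx, map_sub, map_smul, smul_eq_mul, sub_eq_zero] at h0
  rw [h0]; ring

end Aux

/-- `ω` is multiplicative iff `Var_ω(a²) = 0` for all Hermitian `a`. -/
theorem statement1 {A : Type*} [Ring A] [Algebra ℂ A] [StarRing A] [StarModule ℂ A]
    (ω : A →ₗ[ℂ] ℂ) (hω : AlgState ω) :
    (∀ a b : A, ω (a * b) = ω a * ω b) ↔
      ∀ a : A, IsSelfAdjoint a → Var ω (a ^ 2) = 0 := by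
  constructor
  · intro hm a ha
    unfold Var
    have hst : star (a ^ 2) = a ^ 2 := (ha.pow 2).star_eq
    have hpos : 0 ≤ ω (a ^ 2) := by
      have := hω.1 a
      rwa [ha.star_eq, ← sq] at this
    have hr : (starRingEnd ℂ) (ω (a ^ 2)) = ω (a ^ 2) := conj_eq_of_nonneg hpos
    rw [hst, Complex.normSq_eq_conj_mul_self, hr, hm (a ^ 2) (a ^ 2)]
    ring
  · intro H a b
    obtain ⟨h, k, hh, hk, hb⟩ :
        ∃ h k : A, IsSelfAdjoint h ∧ IsSelfAdjoint k ∧ b = h + Complex.I • k := by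
      refine ⟨(1 / 2 : ℂ) • (b + star b), (Complex.I / 2) • (star b - b), ?_, ?_, ?_⟩
      · rw [IsSelfAdjoint, star_smul, star_add, star_star, Complex.star_def]
        simp only [map_div₀, map_one, map_ofNat]
        rw [add_comm]
      · rw [IsSelfAdjoint, star_smul, star_sub, star_star, Complex.star_def]
        have h1 : (starRingEnd ℂ) (Complex.I / 2) = -(Complex.I / 2) := by
          simp [map_div₀, Complex.conj_I, map_ofNat]
          ring
        rw [h1, neg_smul, ← smul_neg, neg_sub]
      · rw [smul_smul]
        have hI : Complex.I * (Complex.I / 2) = -(1 / 2 : ℂ) := by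
          rw [mul_div_assoc', Complex.I_mul_I]; norm_num
        rw [hI]
        module
    rw [hb, mul_add, mul_smul_comm, map_add, map_smul, map_add, map_smul, smul_eq_mul,
      smul_eq_mul, mult_herm ω hω H hh a, mult_herm ω hω H hk a]
    ring
end

section
/- Let A be a *-algebra and ω a multiplicative algebraic state on A. If ω = λ ρ₁ + (1−λ) ρ₂ for algebraic states ρ₁, ρ₂ on A and a real number λ with 0 < λ < 1, then ρ₁ = ρ₂ = ω. In other words, every multiplicative algebraic state is an extreme point of the convex set of algebraic states on A. -/
open ComplexOrder

section Aux
variable {A : Type*} [Ring A] [Algebra ℂ A] [StarRing A] [StarModule ℂ A]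

lemma expand1 (ρ : A →ₗ[ℂ] ℂ) (c : ℂ) (a : A) :
    ρ (star (1 + c • a) * (1 + c • a)) =
      ρ 1 + c * ρ a + starRingEnd ℂ c * ρ (star a)
        + (starRingEnd ℂ c * c) * ρ (star a * a) := by
  have : star (1 + c • a) * (1 + c • a)
      = 1 + c • a + (starRingEnd ℂ c) • star a + (starRingEnd ℂ c * c) • (star a * a) := by
    rw [star_add, star_smul, star_one]
    simp only [Complex.star_def, add_mul, mul_add, one_mul, mul_one, smul_mul_smul_comm]
    ring_nf
    rw [mul_smul]
    abel
  rw [this]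
  simp only [map_add, map_smul, smul_eq_mul]

omit [StarModule ℂ A] in
lemma im_eq_zero (ρ : A →ₗ[ℂ] ℂ) (hp : AlgPositive ρ) (a : A) : (ρ (star a * a)).im = 0 :=
  ((Complex.le_def.mp (hp a)).2).symm

lemma herm (ρ : A →ₗ[ℂ] ℂ) (hp : AlgPositive ρ) (a : A) :
    ρ (star a) = starRingEnd ℂ (ρ a) := by
  have h1' : (ρ 1).im = 0 := by
    have := im_eq_zero ρ hp 1; rwa [star_one, one_mul] at this
  have haa : (ρ (star a * a)).im = 0 := im_eq_zero ρ hp a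
  have h1 : (ρ (star (1 + (1:ℂ) • a) * (1 + (1:ℂ) • a))).im = 0 := im_eq_zero ρ hp _
  have h2 : (ρ (star (1 + Complex.I • a) * (1 + Complex.I • a))).im = 0 := im_eq_zero ρ hp _
  rw [expand1] at h1 h2
  simp only [map_one, one_mul, mul_one, Complex.conj_I] at h1 h2
  simp only [Complex.add_im, Complex.mul_im, Complex.I_re, Complex.I_im, Complex.neg_im,
    Complex.neg_re, Complex.mul_re, h1', haa] at h1 h2
  apply Complex.ext
  · simp only [Complex.conj_re]; linarith
  · simp only [Complex.conj_im]; linarith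

lemma var_nonneg (ρ : A →ₗ[ℂ] ℂ) (hp : AlgPositive ρ) (h1 : ρ 1 = 1) (a : A) :
    0 ≤ Var ρ a := by
  set c := ρ a with hc
  have key : ρ (star (a - c • 1) * (a - c • 1)) = Var ρ a := by
    have hexp : star (a - c • 1) * (a - c • 1)
        = star a * a - c • star a - (starRingEnd ℂ c) • a + (starRingEnd ℂ c * c) • (1:A) := by
      rw [star_sub, star_smul, star_one]
      simp only [Complex.star_def, sub_mul, mul_sub, smul_mul_smul_comm, one_mul, mul_one,
        smul_mul_assoc, mul_smul_comm]
      module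
    rw [Var, hexp]
    simp only [map_add, map_sub, map_smul, smul_eq_mul, h1, mul_one, herm ρ hp a, ← hc]
    rw [Complex.mul_conj]
    ring
  rw [← key]
  exact hp _
end Aux

/-- every multiplicative algebraic state is an extreme point of the convex
set of algebraic states. -/
theorem statement2 {A : Type*} [Ring A] [Algebra ℂ A] [StarRing A] [StarModule ℂ A]
    (ω : A →ₗ[ℂ] ℂ) (hω : AlgState ω) (hmul : ∀ a b : A, ω (a * b) = ω a * ω b)
    (ρ₁ ρ₂ : A →ₗ[ℂ] ℂ) (h₁ : AlgState ρ₁) (h₂ : AlgState ρ₂)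
    (t : ℝ) (ht0 : 0 < t) (ht1 : t < 1)
    (heq : ω = (t : ℂ) • ρ₁ + ((1 - t : ℝ) : ℂ) • ρ₂) :
    ρ₁ = ω ∧ ρ₂ = ω := by
  obtain ⟨hωp, hω1⟩ := hω
  have hs : (0:ℂ) ≤ (t:ℂ) := by
    rw [Complex.le_def]; constructor <;> simp [ht0.le]
  have hs' : (0:ℂ) ≤ ((1 - t : ℝ):ℂ) := by
    rw [Complex.le_def]; constructor <;> simp [le_of_lt (sub_pos.mpr ht1)]
  have key : ∀ a : A, ρ₁ a = ρ₂ a := by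
    intro a
    have hva : ω a = (t:ℂ) * ρ₁ a + ((1 - t : ℝ):ℂ) * ρ₂ a := by
      rw [heq]; simp [smul_eq_mul]
    have hvaa : ω (star a * a)
        = (t:ℂ) * ρ₁ (star a * a) + ((1 - t : ℝ):ℂ) * ρ₂ (star a * a) := by
      rw [heq]; simp [smul_eq_mul]
    have hvω : Var ω a = 0 := by
      rw [Var, hmul (star a) a, herm ω hωp a, ← Complex.normSq_eq_conj_mul_self, sub_self]
    have hE : (t:ℂ) * Var ρ₁ a + ((1 - t : ℝ):ℂ) * Var ρ₂ a
        + ((t:ℂ) * ((1 - t : ℝ):ℂ)) * (Complex.normSq (ρ₁ a - ρ₂ a) : ℂ) = 0 := by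
      rw [← hvω]
      simp only [Var, hvaa, hva, ← Complex.mul_conj, map_add, map_sub, map_mul,
        Complex.conj_ofReal]
      push_cast
      ring
    have hterm1 : 0 ≤ (t:ℂ) * Var ρ₁ a := mul_nonneg hs (var_nonneg ρ₁ h₁.1 h₁.2 a)
    have hterm2 : 0 ≤ ((1 - t : ℝ):ℂ) * Var ρ₂ a := mul_nonneg hs' (var_nonneg ρ₂ h₂.1 h₂.2 a)
    have hterm3 : 0 ≤ ((t:ℂ) * ((1 - t : ℝ):ℂ)) * (Complex.normSq (ρ₁ a - ρ₂ a) : ℂ) := by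
      apply mul_nonneg (mul_nonneg hs hs')
      rw [Complex.le_def]; constructor <;> simp [Complex.normSq_nonneg]
    have h3 : ((t:ℂ) * ((1 - t : ℝ):ℂ)) * (Complex.normSq (ρ₁ a - ρ₂ a) : ℂ) = 0 := by
      have heq3 : ((t:ℂ) * ((1 - t : ℝ):ℂ)) * (Complex.normSq (ρ₁ a - ρ₂ a) : ℂ)
          = -((t:ℂ) * Var ρ₁ a + ((1 - t : ℝ):ℂ) * Var ρ₂ a) := by
        linear_combination hE
      refine le_antisymm ?_ hterm3
      rw [heq3]
      exact neg_nonpos_of_nonneg (add_nonneg hterm1 hterm2)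
    have hne : ((t:ℂ) * ((1 - t : ℝ):ℂ)) ≠ 0 := by
      simp only [ne_eq, mul_eq_zero, Complex.ofReal_eq_zero]
      push_neg
      constructor <;> [exact ne_of_gt ht0; linarith]
    have : (Complex.normSq (ρ₁ a - ρ₂ a) : ℂ) = 0 := by
      exact (mul_eq_zero.mp h3).resolve_left hne
    have : Complex.normSq (ρ₁ a - ρ₂ a) = 0 := by exact_mod_cast this
    have := Complex.normSq_eq_zero.mp this
    exact sub_eq_zero.mp this
  have hfin : ∀ a : A, ω a = ρ₁ a := by
    intro a
    rw [heq]
    simp only [LinearMap.add_apply, LinearMap.smul_apply, smul_eq_mul, ← key a]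
    push_cast
    ring
  constructor
  · ext a; exact (hfin a).symm
  · ext a; rw [← key a]; exact (hfin a).symm
end

section
/- Let A be a *-algebra, ω an algebraic state on A that is an extreme point of the convex set of algebraic states on A, and B ⊆ A a unital *-subalgebra such that for every Hermitian a ∈ B there exists a real constant C_a ≥ 0 with ω(a b* b a) ≤ C_a ω(b* b) for all b ∈ A. Then ω is multiplicative on B, i.e. ω(a b) = ω(a) ω(b) for all a, b ∈ B. -/
open ComplexOrder

section Aux

variable {A : Type*} [Ring A] [Algebra ℂ A] [StarRing A] [StarModule ℂ A]

omit [StarModule ℂ A] in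
lemma im_pos (ω : A →ₗ[ℂ] ℂ) (hpos : AlgPositive ω) (a : A) : (ω (star a * a)).im = 0 := by
  have := hpos a; rw [Complex.le_def] at this; exact this.2.symm

lemma herm2 (ω : A →ₗ[ℂ] ℂ) (hpos : AlgPositive ω) (x y : A) :
    ω (star y * x) = (starRingEnd ℂ) (ω (star x * y)) := by
  have h1 : (ω (star x * y) + ω (star y * x)).im = 0 := by
    have e : star (x + y) * (x + y) =
        star x * x + (star x * y + (star y * x + star y * y)) := by
      rw [star_add]; noncomm_ring
    have := im_pos ω hpos (x + y)
    rw [e] at this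
    simp only [map_add, Complex.add_im, im_pos ω hpos x, im_pos ω hpos y] at this
    simp only [Complex.add_im]
    linarith
  have h2 : (ω (star x * y) - ω (star y * x)).re = 0 := by
    have e : star (x + Complex.I • y) * (x + Complex.I • y) =
        star x * x + Complex.I • (star x * y) +
        ((-Complex.I) • (star y * x) + star y * y) := by
      rw [star_add, star_smul]
      have hsI : star Complex.I = -Complex.I := by
        simp [Complex.star_def, Complex.conj_I]
      rw [hsI]
      have e2 : (-Complex.I) * Complex.I = 1 := by
        simp [Complex.I_mul_I]
      rw [add_mul, mul_add, mul_add, smul_mul_assoc, smul_mul_assoc, mul_smul_comm,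
        mul_smul_comm, smul_smul, e2, one_smul]
    have := im_pos ω hpos (x + Complex.I • y)
    rw [e] at this
    simp only [map_add, map_smul, Complex.add_im, im_pos ω hpos x, im_pos ω hpos y,
      smul_eq_mul, neg_mul, Complex.mul_im, Complex.I_re, Complex.I_im, Complex.neg_im] at this
    simp only [Complex.sub_re]
    linarith
  apply Complex.ext <;>
    simp only [Complex.conj_re, Complex.conj_im, Complex.sub_re, Complex.add_im] at *
  · linarith
  · linarith

lemma herm1 (ω : A →ₗ[ℂ] ℂ) (hpos : AlgPositive ω) (x : A) :
    ω (star x) = (starRingEnd ℂ) (ω x) := by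
  simpa using herm2 ω hpos 1 x

lemma cs0 (ω : A →ₗ[ℂ] ℂ) (hpos : AlgPositive ω) (x : A)
    (hx : ω (star x * x) = 0) : ∀ z : A, ω (star x * z) = 0 := by
  have key : ∀ z : A, ω (star z * x) = 0 := by
    intro z
    set u : ℂ := ω (star z * x) with hu
    obtain ⟨K, hK0, hK⟩ : ∃ r : ℝ, 0 ≤ r ∧ ω (star z * z) = r := by
      have := hpos z; rw [Complex.le_def] at this
      exact ⟨(ω (star z * z)).re, by simpa using this.1,
        by simp [Complex.ext_iff, ← this.2]⟩
    by_contra hne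
    set s : ℝ := (K + 1)⁻¹ with hs
    have hs0 : 0 < s := by positivity
    have hKs : s * K < 2 := by
      rw [hs]
      have : (K + 1)⁻¹ * K < 1 := by
        rw [inv_mul_lt_one₀ (by linarith)]; linarith
      linarith
    set t : ℂ := -(s : ℂ) * u with ht
    have hexp : ω (star (x + t • z) * (x + t • z)) =
        (starRingEnd ℂ) t * u + t * (starRingEnd ℂ) u +
          ((starRingEnd ℂ) t * t) * (K : ℂ) := by
      rw [star_add, star_smul, add_mul, mul_add, mul_add, smul_mul_assoc, smul_mul_assoc,
        mul_smul_comm, mul_smul_comm, smul_smul]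
      simp only [map_add, map_smul, smul_eq_mul, hx, hK, ← hu, Complex.star_def]
      have hxz : ω (star x * z) = (starRingEnd ℂ) u := by
        rw [hu, herm2 ω hpos z x]
      rw [hxz]
      ring
    have hval : (starRingEnd ℂ) t * u + t * (starRingEnd ℂ) u +
        ((starRingEnd ℂ) t * t) * (K : ℂ) =
        ((-2 * s * Complex.normSq u + s^2 * Complex.normSq u * K : ℝ) : ℂ) := by
      rw [ht]
      simp only [map_mul, map_neg, Complex.conj_ofReal]
      push_cast
      linear_combination ((-2*(s:ℂ) + (s:ℂ)^2*(K:ℂ)) * Complex.mul_conj u)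
    have hge := hpos (x + t • z)
    rw [hexp, hval] at hge
    have : (0:ℝ) ≤ -2 * s * Complex.normSq u + s^2 * Complex.normSq u * K := by
      exact_mod_cast hge
    have hnsq : 0 < Complex.normSq u := by
      have := Complex.normSq_pos.mpr hne
      simpa using this
    have h5 : s*K - 2 < 0 := by linarith
    have h6 : s * Complex.normSq u * (s*K - 2) < 0 :=
      mul_neg_of_pos_of_neg (mul_pos hs0 hnsq) h5
    nlinarith [h6, this]
  intro z
  rw [herm2 ω hpos z x, key z, map_zero]

lemma dominated (ω : A →ₗ[ℂ] ℂ) (hω : AlgState ω)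
    (hext : ∀ ρ₁ ρ₂ : A →ₗ[ℂ] ℂ, AlgState ρ₁ → AlgState ρ₂ → ∀ t : ℝ, 0 < t → t < 1 →
      ω = (t : ℂ) • ρ₁ + ((1 - t : ℝ) : ℂ) • ρ₂ → ρ₁ = ω ∧ ρ₂ = ω)
    (a : A) (ha : star a = a)
    (hC : ∃ C : ℝ, 0 ≤ C ∧ ∀ b : A, ω (a * (star b * b) * a) ≤ (C : ℂ) * ω (star b * b)) :
    ∀ x : A, ω (a * x * a) = ω (a * a) * ω x := by
  obtain ⟨hpos, hone⟩ := hω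
  set φ : A →ₗ[ℂ] ℂ := ω.comp ((LinearMap.mulRight ℂ a).comp (LinearMap.mulLeft ℂ a)) with hφ
  have hφx : ∀ x : A, φ x = ω (a * x * a) := fun x => rfl
  have hφpos : AlgPositive φ := by
    intro b
    rw [hφx]
    have : a * (star b * b) * a = star (b * a) * (b * a) := by
      rw [star_mul, ha]; noncomm_ring
    rw [this]
    exact hpos (b * a)
  have hφ1 : φ 1 = ω (a * a) := by rw [hφx]; rw [mul_one]
  obtain ⟨r, hr0, hr⟩ : ∃ r : ℝ, 0 ≤ r ∧ φ 1 = r := by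
    have := hφpos 1
    rw [Complex.le_def] at this
    exact ⟨(φ (star 1 * 1)).re, by simpa using this.1,
      by simp only [star_one, one_mul] at this ⊢; simp [Complex.ext_iff, ← this.2]⟩
  rcases eq_or_lt_of_le hr0 with hr0' | hr0'
  · -- r = 0 case
    have haa : ω (star a * a) = 0 := by
      rw [ha, ← hφ1, hr, ← hr0']; simp
    have hz := cs0 ω hpos a haa
    intro x
    have h1 : ω (a * a) = 0 := by have := hz a; rwa [ha] at this
    have h2 : ω (a * x * a) = 0 := by
      have := hz (x * a); rw [ha] at this; rw [mul_assoc]; exact this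
    rw [h1, h2, zero_mul]
  · -- r > 0 case
    obtain ⟨C, hC0, hCb⟩ := hC
    have hrC : r ≤ C := by
      have := hCb 1
      simp only [star_one, one_mul, mul_one, hone] at this
      rw [← hφ1, hr] at this
      exact_mod_cast this
    set D : ℝ := C + 1 with hD
    have hD0 : 0 < D := by linarith
    have hDr : r < D := by linarith
    set t : ℝ := r / D with htdef
    have ht0 : 0 < t := div_pos hr0' hD0
    have ht1 : t < 1 := (div_lt_one hD0).mpr hDr
    set ρ₁ : A →ₗ[ℂ] ℂ := ((r⁻¹ : ℝ) : ℂ) • φ with hρ₁def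
    set ρ₂ : A →ₗ[ℂ] ℂ := (((D - r)⁻¹ : ℝ) : ℂ) • ((D : ℂ) • ω - φ) with hρ₂def
    have hs₁ : AlgState ρ₁ := by
      constructor
      · intro b
        rw [hρ₁def]
        simp only [LinearMap.smul_apply, smul_eq_mul]
        exact mul_nonneg (by exact_mod_cast Complex.zero_le_real.mpr (by positivity))
          (hφpos b)
      · rw [hρ₁def]
        simp only [LinearMap.smul_apply, smul_eq_mul, hr]
        rw [← Complex.ofReal_mul]
        norm_num [ne_of_gt hr0']
    have hs₂ : AlgState ρ₂ := by
      constructor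
      · intro b
        rw [hρ₂def]
        simp only [LinearMap.smul_apply, LinearMap.sub_apply, smul_eq_mul]
        refine mul_nonneg (by
          exact_mod_cast Complex.zero_le_real.mpr (inv_nonneg.mpr (by linarith : (0:ℝ) ≤ D - r))) ?_
        rw [sub_nonneg]
        calc φ (star b * b) = ω (a * (star b * b) * a) := hφx _
          _ ≤ (C : ℂ) * ω (star b * b) := hCb b
          _ ≤ (D : ℂ) * ω (star b * b) := by
              have h1 : 0 ≤ ω (star b * b) := hpos b
              have h2 : ((C:ℂ)) ≤ (D:ℂ) := by exact_mod_cast (by linarith : C ≤ D)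
              exact mul_le_mul_of_nonneg_right h2 h1
      · rw [hρ₂def]
        simp only [LinearMap.smul_apply, LinearMap.sub_apply, smul_eq_mul, hone, hr]
        rw [mul_one, ← Complex.ofReal_sub, ← Complex.ofReal_mul]
        norm_num [ne_of_gt (by linarith : (0:ℝ) < D - r)]
    have hdecomp : ω = (t : ℂ) • ρ₁ + ((1 - t : ℝ) : ℂ) • ρ₂ := by
      ext x
      simp only [LinearMap.add_apply, LinearMap.smul_apply, hρ₁def, hρ₂def,
        LinearMap.sub_apply, smul_eq_mul, htdef]
      push_cast
      have hrne : (r : ℂ) ≠ 0 := by exact_mod_cast ne_of_gt hr0'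
      have hDne : (D : ℂ) ≠ 0 := by exact_mod_cast ne_of_gt hD0
      have hDrne : ((D : ℂ) - r) ≠ 0 := by
        rw [← Complex.ofReal_sub]; exact_mod_cast ne_of_gt (by linarith : (0:ℝ) < D - r)
      field_simp
      ring
    obtain ⟨h₁, _⟩ := hext ρ₁ ρ₂ hs₁ hs₂ t ht0 ht1 hdecomp
    intro x
    have := congrArg (fun f : A →ₗ[ℂ] ℂ => f x) h₁
    simp only [hρ₁def, LinearMap.smul_apply, smul_eq_mul] at this
    have hrne : (r : ℂ) ≠ 0 := by exact_mod_cast ne_of_gt hr0'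
    rw [Complex.ofReal_inv] at this
    have hφeq : φ x = (r : ℂ) * ω x := by
      rw [← this, ← mul_assoc, mul_inv_cancel₀ hrne, one_mul]
    rw [← hφx, hφeq, ← hφ1, hr]

lemma multherm (ω : A →ₗ[ℂ] ℂ) (hω : AlgState ω)
    (hext : ∀ ρ₁ ρ₂ : A →ₗ[ℂ] ℂ, AlgState ρ₁ → AlgState ρ₂ → ∀ t : ℝ, 0 < t → t < 1 →
      ω = (t : ℂ) • ρ₁ + ((1 - t : ℝ) : ℂ) • ρ₂ → ρ₁ = ω ∧ ρ₂ = ω)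
    (B : StarSubalgebra ℂ A)
    (hbound : ∀ a ∈ B, IsSelfAdjoint a → ∃ C : ℝ, 0 ≤ C ∧
      ∀ b : A, ω (a * (star b * b) * a) ≤ (C : ℂ) * ω (star b * b))
    (a : A) (haB : a ∈ B) (ha : star a = a) :
    ∀ z : A, ω (a * z) = ω a * ω z := by
  obtain ⟨hpos, hone⟩ := hω
  have Q : ∀ c : A, c ∈ B → star c = c → ∀ x : A, ω (c * x * c) = ω (c * c) * ω x := by
    intro c hc hcs
    exact dominated ω ⟨hpos, hone⟩ hext c hcs (hbound c hc hcs)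
  have ha1B : a + 1 ∈ B := B.add_mem haB B.one_mem
  have ha1s : star (a + 1) = a + 1 := by rw [star_add, star_one, ha]
  have key : ∀ x : A, ω (a * x) + ω (x * a) = 2 * ω a * ω x := by
    intro x
    have e1 := Q a haB ha x
    have e2 := Q (a + 1) ha1B ha1s x
    have exp1 : (a + 1) * x * (a + 1) = a * x * a + (a * x + (x * a + x)) := by
      noncomm_ring
    have exp2 : (a + 1) * (a + 1) = a * a + (a + (a + 1)) := by noncomm_ring
    rw [exp1, exp2] at e2
    simp only [map_add, hone, e1] at e2
    linear_combination e2
  have haa : ω (a * a) = ω a * ω a := by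
    have := key a
    linear_combination this / 2
  have hreal : (starRingEnd ℂ) (ω a) = ω a := by
    have := herm1 ω hpos a
    rw [ha] at this
    exact this.symm
  set c : ℂ := ω a with hc
  set a' : A := a - c • 1 with ha'
  have hstarc : star c = c := by rw [Complex.star_def]; exact hreal
  have ha's : star a' = a' := by
    rw [ha', star_sub, star_smul, star_one, ha, hstarc]
  have h0 : ω (star a' * a') = 0 := by
    rw [ha's, ha']
    have exp3 : (a - c • 1) * (a - c • 1) = a * a - c • a - c • a + (c * c) • 1 := by
      simp only [mul_sub, sub_mul, smul_sub, smul_mul_assoc, mul_smul_comm, one_mul,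
        mul_one, smul_smul]
      abel
    rw [exp3]
    simp only [map_add, map_sub, map_smul, smul_eq_mul, hone, haa, ← hc]
    ring
  intro z
  have := cs0 ω hpos a' h0 z
  rw [ha's, ha'] at this
  simp only [sub_mul, smul_mul_assoc, one_mul, map_sub, map_smul, smul_eq_mul] at this
  linear_combination this

end Aux

/-- if `ω` is an extreme algebraic state and `B` a unital *-subalgebra such
that for every Hermitian `a ∈ B` there is `C_a ≥ 0` with `ω(a b* b a) ≤ C_a ω(b* b)` for
all `b ∈ A`, then `ω` is multiplicative on `B`. -/
theorem statement4 {A : Type*} [Ring A] [Algebra ℂ A] [StarRing A] [StarModule ℂ A]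
    (ω : A →ₗ[ℂ] ℂ) (hω : AlgState ω)
    (hext : ∀ ρ₁ ρ₂ : A →ₗ[ℂ] ℂ, AlgState ρ₁ → AlgState ρ₂ → ∀ t : ℝ, 0 < t → t < 1 →
      ω = (t : ℂ) • ρ₁ + ((1 - t : ℝ) : ℂ) • ρ₂ → ρ₁ = ω ∧ ρ₂ = ω)
    (B : StarSubalgebra ℂ A)
    (hbound : ∀ a ∈ B, IsSelfAdjoint a → ∃ C : ℝ, 0 ≤ C ∧
      ∀ b : A, ω (a * (star b * b) * a) ≤ (C : ℂ) * ω (star b * b)) :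
    ∀ a ∈ B, ∀ b ∈ B, ω (a * b) = ω a * ω b := by
  intro a haB b _hbB
  set h : A := (2⁻¹ : ℂ) • (a + star a) with hh
  set k : A := ((-(2⁻¹) * Complex.I : ℂ)) • (a - star a) with hk
  have hhs : star h = h := by
    rw [hh, star_smul, star_add, star_star]
    have : (star (2⁻¹ : ℂ)) = (2⁻¹ : ℂ) := by
      simp [Complex.star_def]
    rw [this, add_comm]
  have hks : star k = k := by
    rw [hk, star_smul, star_sub, star_star]
    have : (star (-(2⁻¹) * Complex.I : ℂ)) = (2⁻¹ * Complex.I : ℂ) := by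
      simp [Complex.star_def, Complex.conj_I]
    rw [this]
    module
  have hscal : Complex.I * (-(2⁻¹) * Complex.I) = (2⁻¹ : ℂ) := by
    linear_combination (-(2⁻¹) : ℂ) * Complex.I_mul_I
  have hdecomp : a = h + Complex.I • k := by
    rw [hh, hk, smul_smul, hscal]
    module
  have hhB : h ∈ B := B.smul_mem (B.add_mem haB (B.star_mem' haB)) _
  have hkB : k ∈ B := B.smul_mem (B.sub_mem haB (B.star_mem' haB)) _
  have H1 := multherm ω hω hext B hbound h hhB hhs b
  have H2 := multherm ω hω hext B hbound k hkB hks b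
  calc ω (a * b) = ω ((h + Complex.I • k) * b) := by rw [← hdecomp]
    _ = ω (h * b) + Complex.I * ω (k * b) := by
        simp only [add_mul, smul_mul_assoc, map_add, map_smul, smul_eq_mul]
    _ = (ω h + Complex.I * ω k) * ω b := by rw [H1, H2]; ring
    _ = ω a * ω b := by
        rw [hdecomp]
        simp only [map_add, map_smul, smul_eq_mul]
end

section
/- Let (A, Ω) be an abstract O*-algebra such that A is commutative and symmetric, i.e. for every Hermitian a ∈ A the element 1 + a² has a multiplicative inverse in A. Then the set of pure states of (A, Ω) equals the set of characters of (A, Ω). -/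
open ComplexOrder

variable {A : Type*} [Ring A] [Algebra ℂ A] [StarRing A] [StarModule ℂ A]

noncomputable def starLF (ω : A →ₗ[ℂ] ℂ) : A →ₗ[ℂ] ℂ where
  toFun a := starRingEnd ℂ (ω (star a))
  map_add' a b := by simp [star_add]
  map_smul' c a := by simp [star_smul]

def bimodLF (b c : A) (ω : A →ₗ[ℂ] ℂ) : A →ₗ[ℂ] ℂ where
  toFun a := ω (c * a * b)
  map_add' x y := by simp [mul_add, add_mul]
  map_smul' r x := by simp [mul_smul_comm, smul_mul_assoc]

/-- A quasi-ordered *-algebra: a quasi-order on the Hermitian elements compatible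
with translations and conjugations, with `0 ≲ 1`. -/
structure QOSA (A : Type*) [Ring A] [Algebra ℂ A] [StarRing A] [StarModule ℂ A] where
  le : A → A → Prop
  le_refl : ∀ a : A, IsSelfAdjoint a → le a a
  le_trans : ∀ a b c : A, IsSelfAdjoint a → IsSelfAdjoint b → IsSelfAdjoint c →
    le a b → le b c → le a c
  add_right : ∀ a b c : A, IsSelfAdjoint a → IsSelfAdjoint b → IsSelfAdjoint c →
    le a b → le (a + c) (b + c)
  conj_le : ∀ a b d : A, IsSelfAdjoint a → IsSelfAdjoint b →
    le a b → le (star d * a * d) (star d * b * d)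
  zero_le_one : le 0 1

/-- The positive cone `A⁺` of a quasi-ordered *-algebra. -/
def QOSA.pos (𝒜 : QOSA A) : Set A := {a | IsSelfAdjoint a ∧ 𝒜.le 0 a}

/-- A positive element is coercive if `ε·1 ≲ q` for some real `ε > 0`. -/
def QOSA.Coercive (𝒜 : QOSA A) (q : A) : Prop :=
  q ∈ 𝒜.pos ∧ ∃ ε : ℝ, 0 < ε ∧ 𝒜.le ((ε : ℂ) • (1 : A)) q

/-- A dominant set: nonempty, pairwise commuting Hermitian elements, squares coercive,
closed under scaling by reals `≥ 1` and under multiplication. -/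
def QOSA.Dominant (𝒜 : QOSA A) (Q : Set A) : Prop :=
  Q.Nonempty ∧ (∀ q ∈ Q, IsSelfAdjoint q) ∧ (∀ q ∈ Q, ∀ r ∈ Q, q * r = r * q) ∧
    (∀ q ∈ Q, 𝒜.Coercive (q ^ 2)) ∧
    (∀ q ∈ Q, ∀ c : ℝ, 1 ≤ c → (c : ℂ) • q ∈ Q) ∧ (∀ q ∈ Q, ∀ r ∈ Q, q * r ∈ Q)

/-- `Q^↓`, the set of elements dominated by `Q`. -/
def QOSA.domSub (𝒜 : QOSA A) (Q : Set A) : Set A :=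
  {a | ∀ q ∈ Q, ∃ r ∈ Q, ∃ s ∈ Q,
    𝒜.le (star a * q ^ 2 * a) (r ^ 2) ∧ 𝒜.le (a * q ^ 2 * star a) (s ^ 2)}

/-- An abstract O*-algebra: a quasi-ordered *-algebra together with a subspace `Ω` of the
dual, stable under the involution and the bimodule actions, spanned by its positive part
and determining the order on `A`. -/
structure AOSA (A : Type*) [Ring A] [Algebra ℂ A] [StarRing A] [StarModule ℂ A]
    extends QOSA A where
  Om : Submodule ℂ (A →ₗ[ℂ] ℂ)
  star_mem : ∀ ω ∈ Om, starLF ω ∈ Om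
  bimod_mem : ∀ ω ∈ Om, ∀ b c : A, bimodLF b c ω ∈ Om
  span_eq : Om = Submodule.span ℂ {ω | ω ∈ Om ∧ starLF ω = ω ∧
    ∀ a : A, IsSelfAdjoint a → toQOSA.le 0 a → 0 ≤ ω a}
  pos_iff : ∀ a : A, IsSelfAdjoint a → (toQOSA.le 0 a ↔
    ∀ ω ∈ Om, starLF ω = ω →
      (∀ b : A, IsSelfAdjoint b → toQOSA.le 0 b → 0 ≤ ω b) → 0 ≤ ω a)

/-- The positive linear functionals `Ω⁺` of an abstract O*-algebra. -/
def AOSA.OmPos (𝒜 : AOSA A) : Set (A →ₗ[ℂ] ℂ) :=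
  {ω | ω ∈ 𝒜.Om ∧ starLF ω = ω ∧ ∀ a : A, IsSelfAdjoint a → 𝒜.le 0 a → 0 ≤ ω a}

/-- The states of an abstract O*-algebra. -/
def AOSA.States (𝒜 : AOSA A) : Set (A →ₗ[ℂ] ℂ) := {ω | ω ∈ 𝒜.OmPos ∧ ω 1 = 1}

/-- A pure state: an extreme point of the convex set of states. -/
def AOSA.IsPureState (𝒜 : AOSA A) (ω : A →ₗ[ℂ] ℂ) : Prop :=
  ω ∈ 𝒜.States ∧ ∀ ρ₁ ∈ 𝒜.States, ∀ ρ₂ ∈ 𝒜.States, ∀ t : ℝ, 0 < t → t < 1 →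
    ω = (t : ℂ) • ρ₁ + ((1 - t : ℝ) : ℂ) • ρ₂ → ρ₁ = ω ∧ ρ₂ = ω

/-- A character: a multiplicative state. -/
def AOSA.IsCharacter (𝒜 : AOSA A) (ω : A →ₗ[ℂ] ℂ) : Prop :=
  ω ∈ 𝒜.States ∧ ∀ a b : A, ω (a * b) = ω a * ω b

/-- Regularity: every Hermitian, algebraically positive element of `Ω` is in `Ω⁺`. -/
def AOSA.Regular (𝒜 : AOSA A) : Prop :=
  ∀ ω ∈ 𝒜.Om, starLF ω = ω → AlgPositive ω → ω ∈ 𝒜.OmPos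

/-- The weak topology on `A`, defined by the seminorms `a ↦ |ω a|`, `ω ∈ Ω`. -/
def AOSA.weakTop (𝒜 : AOSA A) : TopologicalSpace A :=
  TopologicalSpace.generateFrom
    {U | ∃ (a₀ : A) (ω : A →ₗ[ℂ] ℂ) (_ : ω ∈ 𝒜.Om) (ε : ℝ), 0 < ε ∧
      U = {a | ‖ω (a - a₀)‖ < ε}}

/-- The strong topology on `A`, defined by the seminorms `a ↦ √(ω (a* a))`, `ω ∈ Ω⁺`. -/
def AOSA.strongTop (𝒜 : AOSA A) : TopologicalSpace A :=
  TopologicalSpace.generateFrom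
    {U | ∃ (a₀ : A) (ω : A →ₗ[ℂ] ℂ) (_ : ω ∈ 𝒜.OmPos) (ε : ℝ), 0 < ε ∧
      U = {a | Real.sqrt ((ω (star (a - a₀) * (a - a₀))).re) < ε}}

/-- The cone `A⁺⁺` of algebraically positive elements: finite sums of elements `a* a`. -/
def algCone (A : Type*) [Ring A] [StarRing A] : Set A :=
  {x | ∃ (n : ℕ) (f : Fin n → A), x = ∑ i, star (f i) * f i}

/-- `‖a‖_{ω,∞} = sup { √(ω (b* a* a b)) : ω (b* b) = 1 } ∈ [0,∞]`. -/
noncomputable def opNorm (ω : A →ₗ[ℂ] ℂ) (a : A) : ENNReal :=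
  ⨆ (b : A) (_ : ω (star b * b) = 1),
    ENNReal.ofReal (Real.sqrt ((ω (star b * (star a * a) * b)).re))

/-- `ω` is a Stieltjes state for `a`: for each `b` with `ω(b* b) = 1`, either
`ω(b* a b) = 0` or `∑_{n≥1} ω(b* aⁿ b)^{-1/(2n)} = ∞`. -/
def AOSA.StieltjesState (𝒜 : AOSA A) (ω : A →ₗ[ℂ] ℂ) (a : A) : Prop :=
  ∀ b : A, ω (star b * b) = 1 →
    ω (star b * a * b) = 0 ∨
      (∑' n : ℕ, (ENNReal.ofReal
        (((ω (star b * a ^ (n + 1) * b)).re) ^ ((1 : ℝ) / (2 * ((n : ℝ) + 1)))))⁻¹) = ⊤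

/-- Downwards closed: every Hermitian functional positive on `A⁺` and dominated by some
element of `Ω⁺` belongs to `Ω⁺`. -/
def AOSA.DownwardsClosed (𝒜 : AOSA A) : Prop :=
  ∀ ρ : A →ₗ[ℂ] ℂ, starLF ρ = ρ → (∀ a : A, IsSelfAdjoint a → 𝒜.le 0 a → 0 ≤ ρ a) →
    (∃ ω ∈ 𝒜.OmPos, ∀ a : A, IsSelfAdjoint a → 𝒜.le 0 a → 0 ≤ ω a - ρ a) →
    ρ ∈ 𝒜.OmPos

/-- The dominant set generated by `Q'`: all `λ q₁' ⋯ q_N'` with `λ ≥ 1`, `N ≥ 1`. -/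
def domGen (Q' : Set A) : Set A :=
  {x | ∃ (c : ℝ) (l : List A), 1 ≤ c ∧ l ≠ [] ∧ (∀ y ∈ l, y ∈ Q') ∧
    x = (c : ℂ) • l.prod}

/-- `(A, Ω)` has sufficiently many Stieltjes states. -/
def AOSA.SuffStieltjes (𝒜 : AOSA A) : Prop :=
  ∃ Q' : Set A, Q'.Nonempty ∧ (∀ q ∈ Q', 𝒜.Coercive q) ∧
    (∀ q ∈ Q', ∀ r ∈ Q', q * r = r * q) ∧
    (∀ ω ∈ 𝒜.States, ∀ q ∈ Q', 𝒜.StieltjesState ω q) ∧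
    𝒜.pos ⊆ @closure A 𝒜.strongTop (𝒜.domSub (domGen Q') ∩ 𝒜.pos)

section Stmt5Helpers

variable {A : Type*} [CommRing A] [Algebra ℂ A] [StarRing A] [StarModule ℂ A]

private lemma lin0 (c d : ℂ) (h : ∀ t : ℝ, 0 ≤ c + (t : ℂ) * d) : d = 0 := by
  have key : ∀ t : ℝ, 0 ≤ c.re + t * d.re ∧ c.im + t * d.im = 0 := by
    intro t
    have h' := h t
    rw [Complex.le_def] at h'
    constructor
    · simpa using h'.1
    · have := h'.2
      simp [Complex.add_im, Complex.mul_im] at this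
      linarith [this]
  have him : d.im = 0 := by
    have k0 := (key 0).2
    have k1 := (key 1).2
    nlinarith [k0, k1]
  have hre : d.re = 0 := by
    by_contra hd
    have hk := (key (-(c.re + 1) / d.re)).1
    rw [div_mul_cancel₀ _ hd] at hk
    linarith
  exact Complex.ext hre him

private lemma expandCS (ρ : A →ₗ[ℂ] ℂ) (x y : A) (s : ℂ) :
    ρ (star (x + s • y) * (x + s • y)) =
      ρ (star x * x) + s * ρ (star x * y) + (starRingEnd ℂ s) * ρ (star y * x)
        + (starRingEnd ℂ s) * s * ρ (star y * y) := by
  simp only [star_add, star_smul, Complex.star_def, add_mul, mul_add, smul_mul_assoc,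
    mul_smul_comm, map_add, map_smul, smul_eq_mul, smul_smul]
  first
    | ring
    | (rw [mul_comm x (star y)]; ring)
    | (rw [mul_comm (star y) x]; ring)

private lemma cs_zero (ρ : A →ₗ[ℂ] ℂ) (hρ : AlgPositive ρ) (y : A)
    (hy : ρ (star y * y) = 0) (x : A) : ρ (star x * y) = 0 ∧ ρ (star y * x) = 0 := by
  have hsum : ρ (star x * y) + ρ (star y * x) = 0 := by
    apply lin0 (ρ (star x * x))
    intro t
    have h := hρ (x + (t : ℂ) • y)
    rw [expandCS, Complex.conj_ofReal, hy, mul_zero, add_zero] at h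
    have e : ρ (star x * x) + (t : ℂ) * (ρ (star x * y) + ρ (star y * x))
        = ρ (star x * x) + (t : ℂ) * ρ (star x * y) + (t : ℂ) * ρ (star y * x) := by ring
    rw [e]; exact h
  have hdiff : ρ (star x * y) - ρ (star y * x) = 0 := by
    have hI : Complex.I * (ρ (star x * y) - ρ (star y * x)) = 0 := by
      apply lin0 (ρ (star x * x))
      intro t
      have h := hρ (x + ((t : ℂ) * Complex.I) • y)
      rw [expandCS, hy, mul_zero, add_zero] at h
      have e : ρ (star x * x) + (t : ℂ) * (Complex.I * (ρ (star x * y) - ρ (star y * x)))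
          = ρ (star x * x) + ((t : ℂ) * Complex.I) * ρ (star x * y)
            + (starRingEnd ℂ ((t : ℂ) * Complex.I)) * ρ (star y * x) := by
        simp only [map_mul, Complex.conj_ofReal, Complex.conj_I]
        ring
      rw [e]; exact h
    rcases mul_eq_zero.mp hI with h | h
    · exact absurd h Complex.I_ne_zero
    · exact h
  refine ⟨?_, ?_⟩
  · linear_combination (hsum + hdiff) / 2
  · linear_combination (hsum - hdiff) / 2

private lemma star_apply_conj (ω : A →ₗ[ℂ] ℂ) (hω : starLF ω = ω) (a : A) :
    ω (star a) = starRingEnd ℂ (ω a) := by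
  have h2 : starRingEnd ℂ (ω (star a)) = ω a := LinearMap.congr_fun hω a
  calc ω (star a) = starRingEnd ℂ (starRingEnd ℂ (ω (star a))) := (Complex.conj_conj _).symm
    _ = starRingEnd ℂ (ω a) := by rw [h2]

private lemma qle_conj (𝒜 : AOSA A) {p : A} (hp : IsSelfAdjoint p) (hle : 𝒜.le 0 p)
    (d : A) : IsSelfAdjoint (star d * p * d) ∧ 𝒜.le 0 (star d * p * d) := by
  constructor
  · simp only [IsSelfAdjoint] at *
    rw [star_mul, star_mul, star_star, hp]
    ring
  · have h := 𝒜.conj_le 0 p d (IsSelfAdjoint.zero A) hp hle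
    rwa [mul_zero, zero_mul] at h

private lemma sq_qpos (𝒜 : AOSA A) (x : A) :
    IsSelfAdjoint (star x * x) ∧ 𝒜.le 0 (star x * x) := by
  have h := qle_conj 𝒜 (IsSelfAdjoint.one A) 𝒜.zero_le_one x
  rwa [mul_one] at h

private lemma omPos_algPos (𝒜 : AOSA A) {ω : A →ₗ[ℂ] ℂ}
    (hω : ∀ a : A, IsSelfAdjoint a → 𝒜.le 0 a → 0 ≤ ω a) : AlgPositive ω := by
  intro x
  exact hω _ (sq_qpos 𝒜 x).1 (sq_qpos 𝒜 x).2

end Stmt5Helpers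

/-- in a symmetric commutative abstract O*-algebra, the pure states are
exactly the characters. -/
theorem statement5 {A : Type*} [CommRing A] [Algebra ℂ A] [StarRing A] [StarModule ℂ A]
    (𝒜 : AOSA A) (hsym : ∀ a : A, IsSelfAdjoint a → IsUnit (1 + a ^ 2)) :
    {ω : A →ₗ[ℂ] ℂ | 𝒜.IsPureState ω} = {ω : A →ₗ[ℂ] ℂ | 𝒜.IsCharacter ω} := by
  ext ω
  simp only [Set.mem_setOf_eq]
  constructor
  · -- pure state → character
    rintro ⟨hωS, hpure⟩
    refine ⟨hωS, ?_⟩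
    obtain ⟨⟨hωOm, hωstar, hωpos⟩, hω1⟩ := hωS
    -- Step 1: for every Hermitian a, with b := (1+a²)⁻¹, we have ω (x b) = ω b · ω x.
    have keyb : ∀ a : A, IsSelfAdjoint a → ∃ b : A, b * (1 + a ^ 2) = 1 ∧
        ∀ x : A, ω (x * b) = ω b * ω x := by
      intro a ha
      obtain ⟨u, hu⟩ := hsym a ha
      refine ⟨↑u⁻¹, by rw [← hu]; exact u.inv_mul, ?_⟩
      set b : A := ↑u⁻¹ with hbdef
      have hb1 : b * (1 + a ^ 2) = 1 := by rw [hbdef, ← hu]; exact u.inv_mul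
      have hsa1a : star (1 + a ^ 2) = 1 + a ^ 2 := by
        rw [star_add, star_one, star_pow, ha.star_eq]
      have h2 : (1 + a ^ 2) * star b = 1 := by
        have h := congrArg star hb1
        rwa [star_mul, hsa1a, star_one] at h
      have hbsa : star b = b := by
        linear_combination (-(star b)) * hb1 + b * h2
      have hdec1 : ∀ p : A, b * p = star b * p * b + star (a * b) * p * (a * b) := by
        intro p
        rw [star_mul, ha.star_eq, hbsa]
        linear_combination (-(b * p)) * hb1
      have hdec2 : ∀ p : A, (1 - b) * p =
          star (a * b) * p * (a * b) + star (a * (a * b)) * p * (a * (a * b)) := by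
        intro p
        rw [star_mul, ha.star_eq, star_mul, star_mul, ha.star_eq, hbsa]
        linear_combination (-(p + a ^ 2 * b * p)) * hb1
      set ρ : A →ₗ[ℂ] ℂ := bimodLF b 1 ω with hρdef
      have hρ_apply : ∀ x : A, ρ x = ω (x * b) := by
        intro x; show ω (1 * x * b) = ω (x * b); rw [one_mul]
      have hρOm : ρ ∈ 𝒜.Om := 𝒜.bimod_mem ω hωOm b 1
      have hρstar : starLF ρ = ρ := by
        apply LinearMap.ext; intro x
        show starRingEnd ℂ (ρ (star x)) = ρ x
        rw [hρ_apply, hρ_apply]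
        have e : star x * b = star (star b * x) := by rw [star_mul, star_star]
        rw [e, star_apply_conj ω hωstar, Complex.conj_conj, hbsa, mul_comm]
      have hρpos : ∀ p : A, IsSelfAdjoint p → 𝒜.le 0 p → 0 ≤ ρ p := by
        intro p hpsa hple
        rw [hρ_apply, mul_comm, hdec1, map_add]
        have h1 := qle_conj 𝒜 hpsa hple b
        have h2 := qle_conj 𝒜 hpsa hple (a * b)
        exact add_nonneg (hωpos _ h1.1 h1.2) (hωpos _ h2.1 h2.2)
      have hμpos : ∀ p : A, IsSelfAdjoint p → 𝒜.le 0 p → 0 ≤ ω p - ρ p := by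
        intro p hpsa hple
        have e : ω p - ρ p = ω ((1 - b) * p) := by
          rw [hρ_apply, sub_mul, one_mul, map_sub, mul_comm b p]
        rw [e, hdec2, map_add]
        have h1 := qle_conj 𝒜 hpsa hple (a * b)
        have h2 := qle_conj 𝒜 hpsa hple (a * (a * b))
        exact add_nonneg (hωpos _ h1.1 h1.2) (hωpos _ h2.1 h2.2)
      have hρ1 : ρ 1 = ω b := by rw [hρ_apply, one_mul]
      have hbreal : ω b = ((ω b).re : ℂ) := by
        have h := star_apply_conj ω hωstar b
        rw [hbsa] at h
        exact (Complex.conj_eq_iff_re.mp h.symm).symm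
      set r : ℝ := (ω b).re with hrdef
      have h0r : (0 : ℝ) ≤ r := by
        have h := hρpos 1 (IsSelfAdjoint.one A) 𝒜.zero_le_one
        rw [hρ1, hbreal] at h
        exact_mod_cast h
      have hr1 : r ≤ 1 := by
        have h := hμpos 1 (IsSelfAdjoint.one A) 𝒜.zero_le_one
        rw [hρ1, hω1, hbreal] at h
        have h' : (0 : ℝ) ≤ 1 - r := by exact_mod_cast h
        linarith
      have hρalg : AlgPositive ρ := omPos_algPos 𝒜 hρpos
      rcases eq_or_lt_of_le h0r with hr0 | hr0
      · -- r = 0 : ρ = 0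
        intro x
        have hz : ρ (star (1 : A) * 1) = 0 := by
          rw [star_one, one_mul, hρ1, hbreal, ← hr0]
          norm_num
        have hc := (cs_zero ρ hρalg 1 hz x).2
        rw [star_one, one_mul] at hc
        rw [← hρ_apply x, hc, hbreal, ← hr0]
        norm_num
      rcases eq_or_lt_of_le hr1 with hr1' | hr1'
      · -- r = 1 : ω = ρ
        intro x
        set μ : A →ₗ[ℂ] ℂ := ω - ρ with hμdef
        have hμapp : ∀ z : A, μ z = ω z - ρ z := fun z => rfl
        have hμalg : AlgPositive μ := by
          intro z
          have h := hμpos _ (sq_qpos 𝒜 z).1 (sq_qpos 𝒜 z).2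
          rwa [← hμapp] at h
        have hz : μ (star (1 : A) * 1) = 0 := by
          rw [star_one, one_mul, hμapp, hω1, hρ1, hbreal, hr1']
          norm_num
        have hc := (cs_zero μ hμalg 1 hz x).2
        rw [star_one, one_mul, hμapp, sub_eq_zero] at hc
        rw [← hρ_apply x, ← hc, hbreal, hr1']
        norm_num
      · -- 0 < r < 1 : use purity
        have hrne : ((r : ℝ) : ℂ) ≠ 0 := by exact_mod_cast hr0.ne'
        have hrne1 : ((1 - r : ℝ) : ℂ) ≠ 0 := by
          have h : (1 - r : ℝ) ≠ 0 := by linarith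
          exact_mod_cast h
        set ρ₁ : A →ₗ[ℂ] ℂ := ((r⁻¹ : ℝ) : ℂ) • ρ with hρ₁def
        set ρ₂ : A →ₗ[ℂ] ℂ := (((1 - r)⁻¹ : ℝ) : ℂ) • (ω - ρ) with hρ₂def
        have hρ₁app : ∀ z : A, ρ₁ z = ((r⁻¹ : ℝ) : ℂ) * ρ z := fun z => rfl
        have hρ₂app : ∀ z : A, ρ₂ z = (((1 - r)⁻¹ : ℝ) : ℂ) * (ω z - ρ z) := fun z => rfl
        have hρ₁S : ρ₁ ∈ 𝒜.States := by
          refine ⟨⟨Submodule.smul_mem _ _ hρOm, ?_, ?_⟩, ?_⟩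
          · apply LinearMap.ext; intro x
            show starRingEnd ℂ (ρ₁ (star x)) = ρ₁ x
            rw [hρ₁app, hρ₁app, map_mul, Complex.conj_ofReal]
            congr 1
            exact LinearMap.congr_fun hρstar x
          · intro p hpsa hple
            rw [hρ₁app]
            refine mul_nonneg ?_ (hρpos p hpsa hple)
            exact_mod_cast inv_nonneg.mpr h0r
          · rw [hρ₁app, hρ1, hbreal,
              show ((r⁻¹ : ℝ) : ℂ) * ((r : ℝ) : ℂ) = ((r⁻¹ * r : ℝ) : ℂ) by push_cast; ring,
              inv_mul_cancel₀ hr0.ne']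
            norm_num
        have hρ₂S : ρ₂ ∈ 𝒜.States := by
          refine ⟨⟨Submodule.smul_mem _ _ (Submodule.sub_mem _ hωOm hρOm), ?_, ?_⟩, ?_⟩
          · apply LinearMap.ext; intro x
            show starRingEnd ℂ (ρ₂ (star x)) = ρ₂ x
            rw [hρ₂app, hρ₂app, map_mul, Complex.conj_ofReal, map_sub]
            congr 1
            congr 1
            · exact LinearMap.congr_fun hωstar x
            · exact LinearMap.congr_fun hρstar x
          · intro p hpsa hple
            rw [hρ₂app]
            refine mul_nonneg ?_ (hμpos p hpsa hple)
            have h : (0 : ℝ) ≤ (1 - r)⁻¹ := inv_nonneg.mpr (by linarith)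
            exact_mod_cast h
          · rw [hρ₂app, hω1, hρ1, hbreal,
              show (1 : ℂ) - ((r : ℝ) : ℂ) = ((1 - r : ℝ) : ℂ) by push_cast; ring,
              show (((1 - r)⁻¹ : ℝ) : ℂ) * ((1 - r : ℝ) : ℂ) = (((1 - r)⁻¹ * (1 - r) : ℝ) : ℂ)
                by push_cast; ring,
              inv_mul_cancel₀ (by linarith : (1 - r : ℝ) ≠ 0)]
            norm_num
        have heq : ω = ((r : ℝ) : ℂ) • ρ₁ + ((1 - r : ℝ) : ℂ) • ρ₂ := by
          apply LinearMap.ext; intro x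
          simp only [LinearMap.add_apply, LinearMap.smul_apply, hρ₁app, hρ₂app,
            smul_eq_mul]
          push_cast
          have hh2 : (1 : ℂ) - (r : ℂ) ≠ 0 := by
            rw [show (1 : ℂ) - (r : ℂ) = ((1 - r : ℝ) : ℂ) by push_cast; ring]
            exact hrne1
          field_simp
          ring
        obtain ⟨hρ₁ω, _⟩ := hpure ρ₁ hρ₁S ρ₂ hρ₂S r hr0 hr1' heq
        intro x
        have hx := LinearMap.congr_fun hρ₁ω x
        rw [hρ₁app] at hx
        have hρx : ρ x = ((r : ℝ) : ℂ) * ω x := by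
          rw [← hx, Complex.ofReal_inv, ← mul_assoc, mul_inv_cancel₀ hrne, one_mul]
        rw [← hρ_apply x, hρx, hbreal]
    -- Step 2: ω (a² x) = ω a² · ω x for Hermitian a
    have hsq : ∀ a : A, IsSelfAdjoint a → ∀ x : A, ω (a ^ 2 * x) = ω (a ^ 2) * ω x := by
      intro a ha x
      obtain ⟨b, hb1, hkey⟩ := keyb a ha
      have h1 : ∀ z : A, ω z = ω b * (ω z + ω (a ^ 2 * z)) := by
        intro z
        have h := hkey ((1 + a ^ 2) * z)
        rw [show (1 + a ^ 2) * z * b = z by linear_combination z * hb1] at h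
        rw [show (1 + a ^ 2) * z = z + a ^ 2 * z by ring, map_add] at h
        exact h
      have hb_ne : ω b ≠ 0 := by
        intro h0
        have h := h1 1
        rw [h0, zero_mul, hω1] at h
        exact one_ne_zero h
      have h2 : ∀ z : A, ω (a ^ 2 * z) = (ω b)⁻¹ * ω z - ω z := by
        intro z
        apply mul_left_cancel₀ hb_ne
        have h3 : ω b * ω (a ^ 2 * z) = ω z - ω b * ω z := by
          linear_combination (-1 : ℂ) * h1 z
        rw [h3, mul_sub, ← mul_assoc, mul_inv_cancel₀ hb_ne, one_mul]
      have h4 := h2 1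
      rw [mul_one, hω1, mul_one] at h4
      rw [h2 x, h4]
      ring
    -- Step 3: ω (a x) = ω a · ω x for Hermitian a
    have hlin : ∀ a : A, IsSelfAdjoint a → ∀ x : A, ω (a * x) = ω a * ω x := by
      intro a ha x
      have h1 := hsq (a + 1) (ha.add (IsSelfAdjoint.one A)) x
      have h2 := hsq a ha x
      have h3 := hsq 1 (IsSelfAdjoint.one A) x
      rw [show ((a + 1 : A)) ^ 2 * x = a ^ 2 * x + (a * x + a * x) + 1 ^ 2 * x by ring,
        show ((a + 1 : A)) ^ 2 = a ^ 2 + (a + a) + 1 ^ 2 by ring] at h1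
      simp only [map_add] at h1
      rw [one_pow, one_mul, hω1] at h1 h3
      linear_combination (h1 - h2 - h3) / 2
    -- Step 4: general multiplicativity
    intro y x
    obtain ⟨h, k, hh, hk, hy⟩ : ∃ h k : A, IsSelfAdjoint h ∧ IsSelfAdjoint k ∧
        y = h + Complex.I • k := by
      refine ⟨(2⁻¹ : ℂ) • (y + star y), ((2⁻¹ : ℂ) * Complex.I) • (star y - y), ?_, ?_, ?_⟩
      · rw [IsSelfAdjoint, star_smul, star_add, star_star, Complex.star_def, map_inv₀,
          Complex.conj_ofNat]
        rw [add_comm]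
      · rw [IsSelfAdjoint, star_smul, star_sub, star_star, Complex.star_def, map_mul,
          map_inv₀, Complex.conj_ofNat, Complex.conj_I]
        rw [show (2⁻¹ : ℂ) * -Complex.I = -((2⁻¹ : ℂ) * Complex.I) by ring, neg_smul,
          ← smul_neg, neg_sub]
      · rw [smul_smul]
        rw [show Complex.I * ((2⁻¹ : ℂ) * Complex.I) = -(2⁻¹ : ℂ) by
          rw [show Complex.I * ((2⁻¹ : ℂ) * Complex.I) = (2⁻¹ : ℂ) * (Complex.I * Complex.I)
            by ring, Complex.I_mul_I]; ring]
        module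
    calc ω (y * x) = ω (h * x) + Complex.I * ω (k * x) := by
          rw [hy, add_mul, smul_mul_assoc, map_add, map_smul, smul_eq_mul]
      _ = (ω h + Complex.I * ω k) * ω x := by
          rw [hlin h hh x, hlin k hk x]; ring
      _ = ω y * ω x := by
          rw [hy, map_add, map_smul, smul_eq_mul]
  · -- character → pure state
    rintro ⟨hωS, hmul⟩
    refine ⟨hωS, ?_⟩
    obtain ⟨⟨hωOm, hωstar, hωpos⟩, hω1⟩ := hωS
    rintro ρ₁ hρ₁S ρ₂ hρ₂S t ht0 ht1 heq
    have hρ₁alg : AlgPositive ρ₁ := omPos_algPos 𝒜 hρ₁S.1.2.2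
    have hρ₂alg : AlgPositive ρ₂ := omPos_algPos 𝒜 hρ₂S.1.2.2
    have hvar : ∀ a : A, ω (star (a - ω a • 1) * (a - ω a • 1)) = 0 := by
      intro a
      simp only [star_sub, star_smul, star_one, Complex.star_def, sub_mul, mul_sub,
        smul_mul_assoc, mul_smul_comm, one_mul, mul_one, smul_smul, map_sub, map_smul,
        smul_eq_mul, hω1]
      rw [hmul (star a) a, star_apply_conj ω hωstar a]
      ring
    have key : ∀ ρ : A →ₗ[ℂ] ℂ, AlgPositive ρ → ρ 1 = 1 →
        (∀ z : A, ω (star z * z) = 0 → ρ (star z * z) = 0) → ρ = ω := by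
      intro ρ hpos h1 hvan
      apply LinearMap.ext; intro a
      have h0 := hvan _ (hvar a)
      have hc := (cs_zero ρ hpos _ h0 1).1
      rw [star_one, one_mul, map_sub, map_smul, h1, smul_eq_mul, mul_one, sub_eq_zero] at hc
      exact hc
    have hvan : ∀ z : A, ω (star z * z) = 0 →
        ρ₁ (star z * z) = 0 ∧ ρ₂ (star z * z) = 0 := by
      intro z hz
      have hsum : (t : ℂ) * ρ₁ (star z * z) + ((1 - t : ℝ) : ℂ) * ρ₂ (star z * z) = 0 := by
        have h := LinearMap.congr_fun heq (star z * z)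
        rw [hz] at h
        simpa [smul_eq_mul] using h.symm
      have ht0' : (0 : ℂ) ≤ (t : ℂ) := by exact_mod_cast ht0.le
      have ht1' : (0 : ℂ) ≤ ((1 - t : ℝ) : ℂ) := by
        exact_mod_cast (by linarith : (0 : ℝ) ≤ 1 - t)
      have p1 : 0 ≤ (t : ℂ) * ρ₁ (star z * z) := mul_nonneg ht0' (hρ₁alg z)
      have p2 : 0 ≤ ((1 - t : ℝ) : ℂ) * ρ₂ (star z * z) := mul_nonneg ht1' (hρ₂alg z)
      have e1 : (t : ℂ) * ρ₁ (star z * z) = 0 := by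
        refine le_antisymm ?_ p1
        calc (t : ℂ) * ρ₁ (star z * z)
            ≤ (t : ℂ) * ρ₁ (star z * z) + ((1 - t : ℝ) : ℂ) * ρ₂ (star z * z) :=
              le_add_of_nonneg_right p2
          _ = 0 := hsum
      have e2 : ((1 - t : ℝ) : ℂ) * ρ₂ (star z * z) = 0 := by
        refine le_antisymm ?_ p2
        calc ((1 - t : ℝ) : ℂ) * ρ₂ (star z * z)
            ≤ (t : ℂ) * ρ₁ (star z * z) + ((1 - t : ℝ) : ℂ) * ρ₂ (star z * z) :=
              le_add_of_nonneg_left p1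
          _ = 0 := hsum
      constructor
      · rcases mul_eq_zero.mp e1 with h | h
        · exact absurd h (by exact_mod_cast ht0.ne')
        · exact h
      · rcases mul_eq_zero.mp e2 with h | h
        · have : (1 - t : ℝ) ≠ 0 := by linarith
          exact absurd h (by exact_mod_cast this)
        · exact h
    exact ⟨key ρ₁ hρ₁alg hρ₁S.2 (fun z hz => (hvan z hz).1),
      key ρ₂ hρ₂alg hρ₂S.2 (fun z hz => (hvan z hz).2)⟩
end

section
/- Let A be a *-algebra, ω an algebraic state on A, and a ∈ A a Hermitian element such that ω(b* a b) ≥ 0 for all b ∈ A. Then: (i) if ω(aⁿ) = 0 for some integer n ≥ 1, then ω(aⁿ) = 0 for all n ≥ 1 and Var_ω(a) = 0; (ii) otherwise ω(aⁿ) > 0 for all n ≥ 1 and, writing a⁰ := 1, both ω(aⁿ)/ω(a^{n−1}) ≤ ω(a^{n+1})/ω(aⁿ) and ω(aⁿ)^{1/n} ≤ ω(a^{n+1})^{1/(n+1)} hold for all n ≥ 1. -/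
open ComplexOrder

section Aux
variable {A : Type*} [Ring A] [Algebra ℂ A] [StarRing A] [StarModule ℂ A]

lemma cs_quad {p q m : ℝ} (h : ∀ t : ℝ, 0 ≤ q * (t * t) + 2 * m * t + p) :
    m ^ 2 ≤ p * q := by
  have := discrim_le_zero h
  unfold discrim at this
  nlinarith [this]

variable {ω : A →ₗ[ℂ] ℂ} {a : A}

lemma mom_nonneg (hω : AlgState ω) (ha : IsSelfAdjoint a)
    (hpos : ∀ b : A, 0 ≤ ω (star b * a * b)) (n : ℕ) : 0 ≤ ω (a ^ n) := by
  rcases Nat.even_or_odd n with ⟨k, hk⟩ | ⟨k, hk⟩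
  · have := hω.1 (a ^ k)
    rwa [(ha.pow k).star_eq, ← pow_add, ← hk] at this
  · have := hpos (a ^ k)
    rwa [(ha.pow k).star_eq, ← pow_succ, ← pow_add,
      show k + 1 + k = n by omega] at this

lemma mom_real (hω : AlgState ω) (ha : IsSelfAdjoint a)
    (hpos : ∀ b : A, 0 ≤ ω (star b * a * b)) (n : ℕ) :
    ω (a ^ n) = ((ω (a ^ n)).re : ℂ) := by
  have h := mom_nonneg hω ha hpos n
  rw [Complex.le_def] at h
  exact Complex.ext rfl (by simpa using h.2.symm)

/-- Cauchy–Schwarz for the (possibly `a`-weighted) form. -/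
lemma mom_cs (hω : AlgState ω) (ha : IsSelfAdjoint a)
    (hpos : ∀ b : A, 0 ≤ ω (star b * a * b)) (j k e : ℕ) (he : e ≤ 1) :
    (ω (a ^ (j + k + e))).re ^ 2 ≤ (ω (a ^ (2 * j + e))).re * (ω (a ^ (2 * k + e))).re := by
  have hMpos : ∀ b : A, 0 ≤ ω (star b * a ^ e * b) := by
    interval_cases e
    · intro b; simpa [mul_assoc] using hω.1 b
    · intro b; simpa using hpos b
  have pw : ∀ u v : ℕ, a ^ u * a ^ e * a ^ v = a ^ (u + v + e) := by
    intro u v; rw [← pow_add, ← pow_add, show u + e + v = u + v + e by omega]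
  apply cs_quad
  intro t
  have hb := hMpos (a ^ j + (t : ℂ) • a ^ k)
  have hexp : star (a ^ j + (t : ℂ) • a ^ k) * a ^ e * (a ^ j + (t : ℂ) • a ^ k)
      = a ^ (2 * j + e) + (t : ℂ) • a ^ (j + k + e) + ((t : ℂ) • a ^ (j + k + e)
        + ((t : ℂ) * (t : ℂ)) • a ^ (2 * k + e)) := by
    rw [star_add, star_smul, (ha.pow j).star_eq, (ha.pow k).star_eq, Complex.star_def,
      Complex.conj_ofReal]
    simp only [add_mul, mul_add, smul_add, smul_mul_assoc, mul_smul_comm, smul_smul]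
    rw [pw j j, pw j k, pw k j, pw k k, show j + j + e = 2 * j + e by omega,
      show k + j + e = j + k + e by omega, show k + k + e = 2 * k + e by omega]
  rw [hexp] at hb
  simp only [map_add, map_smul, smul_eq_mul] at hb
  rw [Complex.le_def] at hb
  have h1 := hb.1
  simp only [Complex.add_re, Complex.zero_re, Complex.mul_re, Complex.mul_im,
    Complex.ofReal_re, Complex.ofReal_im, zero_mul, mul_zero, sub_zero, zero_sub, zero_add] at h1
  nlinarith [h1]

end Aux

/-- growth of moments of a positive element under a state. -/
theorem statement6 {A : Type*} [Ring A] [Algebra ℂ A] [StarRing A] [StarModule ℂ A]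
    (ω : A →ₗ[ℂ] ℂ) (hω : AlgState ω) (a : A) (ha : IsSelfAdjoint a)
    (hpos : ∀ b : A, 0 ≤ ω (star b * a * b)) :
    ((∃ n : ℕ, 1 ≤ n ∧ ω (a ^ n) = 0) →
      (∀ n : ℕ, 1 ≤ n → ω (a ^ n) = 0) ∧ Var ω a = 0) ∧
    ((∀ n : ℕ, 1 ≤ n → ω (a ^ n) ≠ 0) → ∀ n : ℕ, 1 ≤ n →
      0 < ω (a ^ n) ∧
      (ω (a ^ n)).re / (ω (a ^ (n - 1))).re ≤ (ω (a ^ (n + 1))).re / (ω (a ^ n)).re ∧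
      (ω (a ^ n)).re ^ ((1 : ℝ) / n) ≤ (ω (a ^ (n + 1))).re ^ ((1 : ℝ) / (n + 1))) := by
  set m : ℕ → ℝ := fun n => (ω (a ^ n)).re with hm
  have hreal : ∀ n, ω (a ^ n) = ((m n : ℝ) : ℂ) := fun n => mom_real hω ha hpos n
  have hnn : ∀ n, 0 ≤ m n := by
    intro n
    have := mom_nonneg hω ha hpos n
    rw [Complex.le_def] at this
    simpa using this.1
  have hm0 : m 0 = 1 := by simp [hm, hω.2]
  -- log-convexity
  have hlc : ∀ n : ℕ, 1 ≤ n → m n ^ 2 ≤ m (n - 1) * m (n + 1) := by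
    intro n hn
    rcases Nat.even_or_odd n with ⟨k, hk⟩ | ⟨k, hk⟩
    · have hk1 : 1 ≤ k := by omega
      have := mom_cs hω ha hpos (k - 1) k 1 le_rfl
      rw [show k - 1 + k + 1 = n by omega, show 2 * (k - 1) + 1 = n - 1 by omega,
        show 2 * k + 1 = n + 1 by omega] at this
      exact this
    · have := mom_cs hω ha hpos k (k + 1) 0 (by omega)
      rw [show k + (k + 1) + 0 = n by omega, show 2 * k + 0 = n - 1 by omega,
        show 2 * (k + 1) + 0 = n + 1 by omega] at this
      exact this
  constructor
  · rintro ⟨N, hN1, hN0⟩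
    have hmN : m N = 0 := by rw [hm]; simp [hN0]
    -- descend to m 1 = 0
    have hdesc : ∀ j : ℕ, 1 ≤ N - j → m (N - j) = 0 := by
      intro j
      induction j with
      | zero => intro _; simpa using hmN
      | succ i ih =>
        intro hji
        have hNi : 1 ≤ N - i := by omega
        have h0 : m (N - i) = 0 := ih hNi
        have hl := hlc (N - (i + 1)) (by omega)
        rw [show N - (i + 1) + 1 = N - i by omega, h0, mul_zero] at hl
        have hsq : m (N - (i + 1)) ^ 2 = 0 := le_antisymm hl (sq_nonneg _)
        exact pow_eq_zero_iff (n := 2) (by norm_num) |>.mp hsq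
    have hm1 : m 1 = 0 := by
      have := hdesc (N - 1) (by omega)
      rwa [show N - (N - 1) = 1 by omega] at this
    have hall : ∀ n : ℕ, 1 ≤ n → m n = 0 := by
      intro n hn
      have := mom_cs hω ha hpos (n - 1) 0 1 le_rfl
      rw [show n - 1 + 0 + 1 = n by omega, show 2 * 0 + 1 = 1 by omega] at this
      have h2 : m n ^ 2 ≤ m (2 * (n - 1) + 1) * 0 := by rw [← hm1]; exact this
      nlinarith [hnn n, h2]
    refine ⟨fun n hn => by rw [hreal n, hall n hn, Complex.ofReal_zero], ?_⟩
    have h2 : ω (a ^ 2) = 0 := by rw [hreal 2, hall 2 (by omega), Complex.ofReal_zero]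
    have h1 : ω a = 0 := by
      have hr := hreal 1
      rw [pow_one] at hr
      rw [hr, hall 1 le_rfl, Complex.ofReal_zero]
    rw [Var, ha.star_eq, show a * a = a ^ 2 by rw [sq], h2, h1]
    simp
  · intro hne
    have hpos' : ∀ n : ℕ, 1 ≤ n → 0 < m n := by
      intro n hn
      rcases lt_or_eq_of_le (hnn n) with h | h
      · exact h
      · exact absurd (by rw [hreal n, ← h, Complex.ofReal_zero]) (hne n hn)
    have hm0' : ∀ n : ℕ, 0 < m n := by
      intro n
      cases n with
      | zero => rw [hm0]; norm_num
      | succ k => exact hpos' (k + 1) (by omega)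
    -- power inequality by induction
    have hkey : ∀ n : ℕ, 1 ≤ n → m n ^ (n + 1) ≤ m (n + 1) ^ n := by
      intro n hn
      induction n with
      | zero => omega
      | succ i ih =>
        rcases Nat.eq_or_lt_of_le hn with h1 | h1
        · have := hlc 1 le_rfl
          rw [show (1:ℕ) - 1 = 0 from rfl, hm0, one_mul] at this
          rw [show i = 0 by omega]
          simpa using this
        · have hi1 : 1 ≤ i := by omega
          have ih' := ih hi1
          have hlci := hlc (i + 1) (by omega)
          rw [show i + 1 - 1 = i from rfl] at hlci
          -- m(i+1)^(2(i+1)) ≤ (m i * m (i+2))^(i+1) ≤ m(i+1)^i * m(i+2)^(i+1)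
          have h2 : (m (i + 1) ^ 2) ^ (i + 1) ≤ (m i * m (i + 2)) ^ (i + 1) :=
            pow_le_pow_left₀ (sq_nonneg _) hlci (i + 1)
          rw [mul_pow] at h2
          have h3 : m i ^ (i + 1) * m (i + 2) ^ (i + 1) ≤ m (i + 1) ^ i * m (i + 2) ^ (i + 1) :=
            mul_le_mul_of_nonneg_right ih' (pow_nonneg (hnn _) _)
          have h4 : (m (i + 1) ^ 2) ^ (i + 1) ≤ m (i + 1) ^ i * m (i + 2) ^ (i + 1) :=
            le_trans h2 h3
          rw [← pow_mul] at h4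
          have h5 : m (i + 1) ^ (i + 1 + 1) * m (i + 1) ^ i ≤
              m (i + 2) ^ (i + 1) * m (i + 1) ^ i := by
            rw [← pow_add]
            calc m (i + 1) ^ (i + 1 + 1 + i) = m (i + 1) ^ (2 * (i + 1)) := by ring_nf
            _ ≤ m (i + 1) ^ i * m (i + 2) ^ (i + 1) := h4
            _ = m (i + 2) ^ (i + 1) * m (i + 1) ^ i := by ring
          exact le_of_mul_le_mul_right h5 (pow_pos (hm0' (i + 1)) i)
    intro n hn
    refine ⟨?_, ?_, ?_⟩
    · rw [hreal n, Complex.lt_def]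
      constructor
      · simpa using hpos' n hn
      · simp
    · rw [div_le_div_iff₀ (hm0' (n - 1)) (hm0' n)]
      have := hlc n hn
      nlinarith [this]
    · -- rpow part
      have hx := hm0' n
      have hy := hm0' (n + 1)
      have hk := hkey n hn
      have hnR : (0:ℝ) < n := by exact_mod_cast Nat.pos_of_ne_zero (by omega)
      have h1 : m n ^ ((1:ℝ) / n) = (m n ^ (n + 1 : ℕ)) ^ ((1:ℝ) / (n * (n + 1))) := by
        rw [← Real.rpow_natCast (m n) (n + 1), ← Real.rpow_mul hx.le]
        congr 1
        push_cast
        field_simp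
      have h2 : m (n + 1) ^ ((1:ℝ) / (n + 1)) =
          (m (n + 1) ^ (n : ℕ)) ^ ((1:ℝ) / (n * (n + 1))) := by
        rw [← Real.rpow_natCast (m (n + 1)) n, ← Real.rpow_mul hy.le]
        congr 1
        field_simp
      rw [h1, h2]
      apply Real.rpow_le_rpow (pow_nonneg hx.le _) hk
      positivity
end

section
/- Let A be a commutative *-algebra and ω an algebraic state on A. Then for every a ∈ A the following equality holds in the extended nonnegative reals [0, ∞]: sup{ ω(b* a* a b) : b ∈ A, ω(b* b) = 1 } = sup_{n ≥ 1} ω((a* a)ⁿ)^{1/n} = lim_{n → ∞} ω((a* a)ⁿ)^{1/n} (in particular the sequence n ↦ ω((a* a)ⁿ)^{1/n} is non-decreasing, so its supremum and limit coincide). -/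
open ComplexOrder

section CS
variable {A : Type*} [Ring A] [Algebra ℂ A] [StarRing A] [StarModule ℂ A]

lemma pos_im (ω : A →ₗ[ℂ] ℂ) (hω : AlgPositive ω) (u : A) :
    (ω (star u * u)).im = 0 ∧ 0 ≤ (ω (star u * u)).re := by
  have h := hω u
  rw [Complex.le_def] at h
  exact ⟨by simpa using h.2.symm, by simpa using h.1⟩

lemma pos_real (ω : A →ₗ[ℂ] ℂ) (hω : AlgPositive ω) (u : A) :
    ω (star u * u) = ((ω (star u * u)).re : ℂ) :=
  Complex.ext (by simp) (by simp [(pos_im ω hω u).1])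

lemma alg_cs (ω : A →ₗ[ℂ] ℂ) (hω : AlgPositive ω) (u v : A) :
    Complex.normSq (ω (star u * v)) ≤ (ω (star u * u)).re * (ω (star v * v)).re := by
  set α := ω (star u * v) with hα
  set β := ω (star v * u) with hβ
  obtain ⟨himP, hP⟩ := pos_im ω hω u
  obtain ⟨himQ, hQ⟩ := pos_im ω hω v
  set P := (ω (star u * u)).re with hPdef
  set Q := (ω (star v * v)).re with hQdef
  have key : ∀ t : ℂ, 0 ≤ (starRingEnd ℂ) t * t * ω (star u * u)
      + (starRingEnd ℂ) t * α + t * β + ω (star v * v) := by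
    intro t
    have h := hω (t • u + v)
    have hexp : star (t • u + v) * (t • u + v)
        = ((starRingEnd ℂ) t * t) • (star u * u) + (starRingEnd ℂ) t • (star u * v)
          + t • (star v * u) + star v * v := by
      simp only [star_add, star_smul, RCLike.star_def, add_mul, mul_add, smul_mul_assoc,
        mul_smul_comm, smul_smul, smul_add]
      rw [mul_comm ((starRingEnd ℂ) t) t]
      abel
    rw [hexp] at h
    simpa [map_add, map_smul, smul_eq_mul, mul_assoc] using h
  -- imaginary parts
  have him : ∀ t : ℂ, ((starRingEnd ℂ) t * t * ω (star u * u)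
      + (starRingEnd ℂ) t * α + t * β + ω (star v * v)).im = 0 := by
    intro t
    have h := key t
    rw [Complex.le_def] at h
    simpa using h.2.symm
  have h1 := him 1
  have hI := him Complex.I
  simp [Complex.add_im, Complex.mul_im, Complex.mul_re, himP, himQ] at h1 hI
  have hβα : β = (starRingEnd ℂ) α := by
    apply Complex.ext <;> simp [Complex.conj_re, Complex.conj_im] <;> nlinarith [h1, hI]
  -- real quadratic
  have hquad : ∀ x : ℝ, 0 ≤ (Complex.normSq α * P) * (x * x) + (-2 * Complex.normSq α) * x + Q := by
    intro x
    have h := key (-(x : ℂ) * α)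
    rw [Complex.le_def] at h
    have h' := h.1
    rw [pos_real ω hω u, pos_real ω hω v, hβα] at h'
    simp only [map_mul, map_neg, Complex.conj_ofReal] at h'
    rw [show -(x:ℂ) * (starRingEnd ℂ) α * (-(x:ℂ) * α) * (P:ℂ)
          + -(x:ℂ) * (starRingEnd ℂ) α * α + -(x:ℂ) * α * (starRingEnd ℂ) α + (Q:ℂ)
        = (((Complex.normSq α * P) * (x * x) + (-2 * Complex.normSq α) * x + Q : ℝ) : ℂ) by
      have hns : ((Complex.normSq α : ℝ) : ℂ) = (starRingEnd ℂ) α * α := by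
        rw [mul_comm, Complex.mul_conj]
      push_cast
      rw [hns]
      ring] at h'
    simpa using h'
  have hd := discrim_le_zero hquad
  rw [discrim] at hd
  rcases eq_or_lt_of_le (Complex.normSq_nonneg α) with h0 | h0
  · rw [← h0]; exact mul_nonneg hP hQ
  · nlinarith [hd, h0]

end CS

section Moments
variable {A : Type*} [CommRing A] [Algebra ℂ A] [StarRing A] [StarModule ℂ A]

lemma star_x (a : A) : star (star a * a) = star a * a := by
  rw [star_mul, star_star]

lemma star_x_pow (a : A) (n : ℕ) : star ((star a * a) ^ n) = (star a * a) ^ n := by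
  rw [star_pow, star_x]

lemma pow_key (a : A) (i k : ℕ) :
    ((star a * a) ^ i * star a) * (a * (star a * a) ^ k) = (star a * a) ^ (i + k + 1) := by
  rw [pow_add, pow_add, pow_one]; ring

/-- witnesses for log-convexity -/
lemma exists_uv (a : A) (n : ℕ) :
    ∃ u v : A, star u * u = (star a * a) ^ n ∧ star v * v = (star a * a) ^ (n + 2) ∧
      star u * v = (star a * a) ^ (n + 1) := by
  rcases Nat.even_or_odd n with ⟨j, hj⟩ | ⟨j, hj⟩
  · refine ⟨(star a * a) ^ j, (star a * a) ^ (j + 1), ?_, ?_, ?_⟩ <;>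
      · rw [star_pow, star_x, ← pow_add]; congr 1; omega
  · refine ⟨a * (star a * a) ^ j, a * (star a * a) ^ (j + 1), ?_, ?_, ?_⟩ <;>
      · rw [star_mul, star_pow, star_x, pow_key]; congr 1; omega

lemma exists_sq (a : A) (n : ℕ) : ∃ c : A, star c * c = (star a * a) ^ n := by
  obtain ⟨u, v, h, -, -⟩ := exists_uv a n
  exact ⟨u, h⟩

variable (ω : A →ₗ[ℂ] ℂ) (hω : AlgState ω) (a : A)
include hω

lemma m_nonneg (n : ℕ) : 0 ≤ (ω ((star a * a) ^ n)).re := by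
  obtain ⟨c, hc⟩ := exists_sq a n
  rw [← hc]; exact (pos_im ω hω.1 c).2

lemma m_real (n : ℕ) : ω ((star a * a) ^ n) = (((ω ((star a * a) ^ n)).re : ℝ) : ℂ) := by
  obtain ⟨c, hc⟩ := exists_sq a n
  rw [← hc]; exact pos_real ω hω.1 c

lemma m_zero : (ω ((star a * a) ^ 0)).re = 1 := by
  rw [pow_zero, hω.2]; simp

lemma m_logconv (n : ℕ) :
    (ω ((star a * a) ^ (n + 1))).re ^ 2
      ≤ (ω ((star a * a) ^ n)).re * (ω ((star a * a) ^ (n + 2))).re := by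
  obtain ⟨u, v, hu, hv, huv⟩ := exists_uv a n
  have h := alg_cs ω hω.1 u v
  rw [hu, hv, huv, m_real ω hω a (n + 1), Complex.normSq_ofReal] at h
  simpa [sq] using h

lemma m_zero_step (n : ℕ) :
    (ω ((star a * a) ^ n)).re = 0 → (ω ((star a * a) ^ (n + 1))).re = 0 := by
  intro h
  have h1 := m_logconv ω hω a n
  have h2 := m_nonneg ω hω a (n + 1)
  rw [h] at h1
  nlinarith

lemma m_key (n : ℕ) :
    (ω ((star a * a) ^ n)).re ^ (n + 1) ≤ (ω ((star a * a) ^ (n + 1))).re ^ n := by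
  induction n with
  | zero => simp [hω.2]
  | succ n ih =>
    set m : ℕ → ℝ := fun k => (ω ((star a * a) ^ k)).re with hm
    rcases eq_or_lt_of_le (m_nonneg ω hω a (n + 1)) with h0 | h0
    · rw [← h0]
      simp only [zero_pow (by omega : n + 1 + 1 ≠ 0)]
      exact pow_nonneg (m_nonneg ω hω a (n + 2)) _
    · have h1 : (m (n + 1) ^ 2) ^ (n + 1) ≤ (m n * m (n + 2)) ^ (n + 1) :=
        pow_le_pow_left₀ (sq_nonneg _) (m_logconv ω hω a n) _
      have h2 : m n ^ (n + 1) * m (n + 2) ^ (n + 1) ≤ m (n + 1) ^ n * m (n + 2) ^ (n + 1) :=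
        mul_le_mul_of_nonneg_right ih (pow_nonneg (m_nonneg ω hω a (n + 2)) _)
      have h3 : m (n + 1) ^ n * m (n + 1) ^ (n + 2) ≤ m (n + 1) ^ n * m (n + 2) ^ (n + 1) := by
        calc m (n + 1) ^ n * m (n + 1) ^ (n + 2) = (m (n + 1) ^ 2) ^ (n + 1) := by ring
          _ ≤ (m n * m (n + 2)) ^ (n + 1) := h1
          _ = m n ^ (n + 1) * m (n + 2) ^ (n + 1) := by rw [mul_pow]
          _ ≤ m (n + 1) ^ n * m (n + 2) ^ (n + 1) := h2
      exact le_of_mul_le_mul_left h3 (pow_pos h0 n)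

lemma m_mono (n : ℕ) (hn : 1 ≤ n) :
    (ω ((star a * a) ^ n)).re ^ ((1 : ℝ) / n)
      ≤ (ω ((star a * a) ^ (n + 1))).re ^ ((1 : ℝ) / (n + 1)) := by
  set m : ℕ → ℝ := fun k => (ω ((star a * a) ^ k)).re with hm
  have hnn : ∀ k, 0 ≤ m k := m_nonneg ω hω a
  have hkey : m n ^ (n + 1) ≤ m (n + 1) ^ n := m_key ω hω a n
  have e : (0:ℝ) ≤ 1 / (n * (n + 1)) := by positivity
  have h := Real.rpow_le_rpow (pow_nonneg (hnn n) _) hkey e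
  rw [← Real.rpow_natCast (m n) (n + 1), ← Real.rpow_natCast (m (n + 1)) n,
    ← Real.rpow_mul (hnn n), ← Real.rpow_mul (hnn (n + 1))] at h
  have hn0 : (n : ℝ) ≠ 0 := by positivity
  have e1 : ((n : ℕ) + 1 : ℝ) * (1 / (n * (n + 1))) = 1 / n := by field_simp; try ring
  have e2 : ((n : ℕ) : ℝ) * (1 / (n * (n + 1))) = 1 / (n + 1) := by field_simp; try ring
  rw [show (((n : ℕ) + 1 : ℕ) : ℝ) = ((n : ℝ) + 1) by push_cast; ring] at h
  rw [e1] at h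
  · rw [e2] at h
    convert h using 3 <;> push_cast <;> ring
end Moments

section Main
variable {A : Type*} [CommRing A] [Algebra ℂ A] [StarRing A] [StarModule ℂ A]

noncomputable def S1def (ω : A →ₗ[ℂ] ℂ) (a : A) : ENNReal :=
  ⨆ (b : A) (_ : ω (star b * b) = 1),
    ENNReal.ofReal ((ω (star b * (star a * a) * b)).re)

noncomputable def S2def (ω : A →ₗ[ℂ] ℂ) (a : A) : ENNReal :=
  ⨆ (n : ℕ) (_ : 1 ≤ n),
    ENNReal.ofReal ((ω ((star a * a) ^ n)).re ^ ((1 : ℝ) / n))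

variable (ω : A →ₗ[ℂ] ℂ) (hω : AlgState ω) (a : A)
include hω

lemma step_S1 (n : ℕ) :
    ENNReal.ofReal ((ω ((star a * a) ^ (n + 1))).re)
      ≤ S1def ω a * ENNReal.ofReal ((ω ((star a * a) ^ n)).re) := by
  rcases eq_or_lt_of_le (m_nonneg ω hω a n) with h0 | h0
  · rw [m_zero_step ω hω a n h0.symm]; simp
  · obtain ⟨c, hc⟩ := exists_sq a n
    set r : ℝ := (Real.sqrt ((ω ((star a * a) ^ n)).re))⁻¹ with hr
    have hsq : Real.sqrt ((ω ((star a * a) ^ n)).re)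
        * Real.sqrt ((ω ((star a * a) ^ n)).re) = (ω ((star a * a) ^ n)).re :=
      Real.mul_self_sqrt (m_nonneg ω hω a n)
    have hsne : Real.sqrt ((ω ((star a * a) ^ n)).re) ≠ 0 :=
      ne_of_gt (Real.sqrt_pos.mpr h0)
    have hrr : r * r * (ω ((star a * a) ^ n)).re = 1 := by
      rw [hr]; field_simp; try linarith [hsq]
    set b : A := (r : ℂ) • c with hb
    have hsb : star b = (r : ℂ) • star c := by
      rw [hb, star_smul]; congr 1; simp [Complex.star_def, Complex.conj_ofReal]
    have hωbb : ω (star b * b) = 1 := by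
      rw [hsb, hb, smul_mul_smul_comm, map_smul, hc, m_real ω hω a n, smul_eq_mul]
      rw [show ((r : ℂ) * r) * (((ω ((star a * a) ^ n)).re : ℝ) : ℂ)
          = ((r * r * (ω ((star a * a) ^ n)).re : ℝ) : ℂ) by push_cast; ring, hrr]
      norm_num
    have harg : star b * (star a * a) * b = ((r : ℂ) * r) • ((star a * a) ^ (n + 1)) := by
      rw [hsb, hb, smul_mul_assoc, smul_mul_smul_comm]
      congr 1
      rw [show star c * (star a * a) * c = star c * c * (star a * a) by ring, hc, ← pow_succ]
    have hval : (ω (star b * (star a * a) * b)).re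
        = r * r * (ω ((star a * a) ^ (n + 1))).re := by
      rw [harg, map_smul, m_real ω hω a (n + 1), smul_eq_mul]
      rw [show ((r : ℂ) * r) * (((ω ((star a * a) ^ (n + 1))).re : ℝ) : ℂ)
          = ((r * r * (ω ((star a * a) ^ (n + 1))).re : ℝ) : ℂ) by push_cast; ring]
      simp
    have hle : ENNReal.ofReal ((ω (star b * (star a * a) * b)).re) ≤ S1def ω a :=
      le_iSup_of_le b (le_iSup_of_le hωbb le_rfl)
    rw [hval] at hle
    calc ENNReal.ofReal ((ω ((star a * a) ^ (n + 1))).re)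
        = ENNReal.ofReal (r * r * (ω ((star a * a) ^ (n + 1))).re)
            * ENNReal.ofReal ((ω ((star a * a) ^ n)).re) := by
          rw [← ENNReal.ofReal_mul (mul_nonneg (mul_nonneg (by positivity) (by positivity)) (m_nonneg ω hω a (n + 1)))]
          congr 1
          nlinarith [hrr, m_nonneg ω hω a (n + 1)]
      _ ≤ S1def ω a * ENNReal.ofReal ((ω ((star a * a) ^ n)).re) :=
          mul_le_mul_left hle _
lemma pow_S1 (n : ℕ) :
    ENNReal.ofReal ((ω ((star a * a) ^ n)).re) ≤ S1def ω a ^ n := by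
  induction n with
  | zero => simp [hω.2]
  | succ n ih =>
    calc ENNReal.ofReal ((ω ((star a * a) ^ (n + 1))).re)
        ≤ S1def ω a * ENNReal.ofReal ((ω ((star a * a) ^ n)).re) := step_S1 ω hω a n
      _ ≤ S1def ω a * S1def ω a ^ n := mul_le_mul_right ih _
      _ = S1def ω a ^ (n + 1) := by rw [pow_succ]; ring

lemma S2_le_S1 : S2def ω a ≤ S1def ω a := by
  refine iSup₂_le fun n hn => ?_
  have hn0 : ((n : ℕ) : ℝ) ≠ 0 := Nat.cast_ne_zero.mpr (by omega)
  rw [← ENNReal.ofReal_rpow_of_nonneg (m_nonneg ω hω a n) (by positivity)]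
  calc ENNReal.ofReal ((ω ((star a * a) ^ n)).re) ^ ((1 : ℝ) / n)
      ≤ (S1def ω a ^ n) ^ ((1 : ℝ) / n) :=
        ENNReal.rpow_le_rpow (pow_S1 ω hω a n) (by positivity)
    _ = S1def ω a := by
        rw [← ENNReal.rpow_natCast (S1def ω a) n, ← ENNReal.rpow_mul, one_div,
          mul_inv_cancel₀ hn0, ENNReal.rpow_one]

omit hω in
lemma q_pow_eq (b : A) (N : ℕ) : ∃ d : A,
    star d * d = star b * b * (star a * a) ^ N := by
  obtain ⟨c, hc⟩ := exists_sq a N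
  exact ⟨c * b, by rw [star_mul, ← hc]; ring⟩

lemma p_real (b : A) (N : ℕ) :
    0 ≤ (ω (star b * b * (star a * a) ^ N)).re ∧
      ω (star b * b * (star a * a) ^ N)
        = (((ω (star b * b * (star a * a) ^ N)).re : ℝ) : ℂ) := by
  obtain ⟨d, hd⟩ := q_pow_eq a b N
  rw [← hd]
  exact ⟨(pos_im ω hω.1 d).2, pos_real ω hω.1 d⟩

lemma p_sq (b : A) (hb : ω (star b * b) = 1) (N : ℕ) :
    (ω (star b * b * (star a * a) ^ N)).re ^ 2
      ≤ (ω (star b * b * (star a * a) ^ (2 * N))).re := by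
  have h := alg_cs ω hω.1 b ((star a * a) ^ N * b)
  rw [show star b * ((star a * a) ^ N * b) = star b * b * (star a * a) ^ N by ring] at h
  rw [show star ((star a * a) ^ N * b) * ((star a * a) ^ N * b)
      = star b * b * (star a * a) ^ (2 * N) by
    rw [star_mul, star_x_pow, two_mul, pow_add]; ring] at h
  rw [hb] at h
  rw [(p_real ω hω a b N).2, Complex.normSq_ofReal] at h
  simpa [sq] using h

lemma p_C (b : A) (N : ℕ) :
    (ω (star b * b * (star a * a) ^ N)).re ^ 2
      ≤ (ω (star b * b * (star b * b))).re * (ω ((star a * a) ^ (2 * N))).re := by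
  have hqs : star (star b * b) = star b * b := by rw [star_mul, star_star]
  have h := alg_cs ω hω.1 (star b * b) ((star a * a) ^ N)
  rw [hqs] at h
  rw [show star ((star a * a) ^ N) * (star a * a) ^ N = (star a * a) ^ (2 * N) by
    rw [star_x_pow, two_mul, pow_add]] at h
  rw [(p_real ω hω a b N).2, Complex.normSq_ofReal] at h
  simpa [sq] using h

lemma w_pow (b : A) (hb : ω (star b * b) = 1) (k : ℕ) :
    (ω (star b * (star a * a) * b)).re ^ (2 ^ k)
      ≤ (ω (star b * b * (star a * a) ^ (2 ^ k))).re := by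
  have harg : star b * (star a * a) * b = star b * b * (star a * a) ^ 1 := by
    rw [pow_one]; ring
  have hw0 : 0 ≤ (ω (star b * (star a * a) * b)).re := by
    rw [harg]; exact (p_real ω hω a b 1).1
  induction k with
  | zero => rw [pow_zero, pow_one, harg, pow_one]
  | succ k ih =>
    calc (ω (star b * (star a * a) * b)).re ^ (2 ^ (k + 1))
        = ((ω (star b * (star a * a) * b)).re ^ (2 ^ k)) ^ 2 := by
          rw [← pow_mul, pow_succ]
      _ ≤ ((ω (star b * b * (star a * a) ^ (2 ^ k))).re) ^ 2 :=
          pow_le_pow_left₀ (pow_nonneg hw0 _) ih 2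
      _ ≤ (ω (star b * b * (star a * a) ^ (2 * 2 ^ k))).re := p_sq ω hω a b hb _
      _ = (ω (star b * b * (star a * a) ^ (2 ^ (k + 1)))).re := by
          rw [← pow_succ']

lemma chain (b : A) (hb : ω (star b * b) = 1) (k : ℕ) :
    (ω (star b * (star a * a) * b)).re ^ (2 * 2 ^ k)
      ≤ (ω (star b * b * (star b * b))).re * (ω ((star a * a) ^ (2 * 2 ^ k))).re := by
  calc (ω (star b * (star a * a) * b)).re ^ (2 * 2 ^ k)
      = ((ω (star b * (star a * a) * b)).re ^ (2 ^ k)) ^ 2 := by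
        rw [← pow_mul, Nat.mul_comm 2 (2 ^ k)]
    _ ≤ ((ω (star b * b * (star a * a) ^ (2 ^ k))).re) ^ 2 := by
        refine pow_le_pow_left₀ (pow_nonneg ?_ _) (w_pow ω hω a b hb k) 2
        have harg : star b * (star a * a) * b = star b * b * (star a * a) ^ 1 := by
          rw [pow_one]; ring
        rw [harg]; exact (p_real ω hω a b 1).1
    _ ≤ (ω (star b * b * (star b * b))).re * (ω ((star a * a) ^ (2 * 2 ^ k))).re :=
        p_C ω hω a b _

lemma S1_le_S2 : S1def ω a ≤ S2def ω a := by
  refine iSup₂_le fun b hb => ?_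
  by_cases hS2 : S2def ω a = ⊤
  · rw [hS2]; exact le_top
  set s := (S2def ω a).toReal with hs
  have hs0 : 0 ≤ s := ENNReal.toReal_nonneg
  have hms : ∀ n : ℕ, 1 ≤ n → (ω ((star a * a) ^ n)).re ≤ s ^ n := by
    intro n hn
    have hn0 : ((n : ℕ) : ℝ) ≠ 0 := Nat.cast_ne_zero.mpr (by omega)
    have h1 : ENNReal.ofReal ((ω ((star a * a) ^ n)).re ^ ((1 : ℝ) / n)) ≤ S2def ω a :=
      le_iSup_of_le n (le_iSup_of_le hn le_rfl)
    rw [ENNReal.ofReal_le_iff_le_toReal hS2] at h1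
    have h2 := pow_le_pow_left₀ (Real.rpow_nonneg (m_nonneg ω hω a n) _) h1 n
    rwa [← Real.rpow_natCast ((ω ((star a * a) ^ n)).re ^ ((1 : ℝ) / n)) n,
      ← Real.rpow_mul (m_nonneg ω hω a n), one_div,
      inv_mul_cancel₀ hn0, Real.rpow_one] at h2
  have harg : star b * (star a * a) * b = star b * b * (star a * a) ^ 1 := by
    rw [pow_one]; ring
  have hw0 : 0 ≤ (ω (star b * (star a * a) * b)).re := by
    rw [harg]; exact (p_real ω hω a b 1).1
  have hC0 : 0 ≤ (ω (star b * b * (star b * b))).re := by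
    have hqs : star (star b * b) = star b * b := by rw [star_mul, star_star]
    have := (pos_im ω hω.1 (star b * b)).2
    rwa [hqs] at this
  rcases eq_or_lt_of_le hC0 with hC | hC
  · -- C = 0 forces w = 0
    have h1 := chain ω hω a b hb 0
    rw [← hC] at h1
    have h2 : (ω (star b * (star a * a) * b)).re ^ 2 ≤ 0 := by simpa using h1
    have : (ω (star b * (star a * a) * b)).re = 0 := le_antisymm (by nlinarith) hw0
    rw [this]
    simp
  · set C := (ω (star b * b * (star b * b))).re with hCdef
    set w := (ω (star b * (star a * a) * b)).re with hwdef
    have key : ∀ k : ℕ, w ≤ C ^ ((1 : ℝ) / ((2 * 2 ^ k : ℕ) : ℝ)) * s := by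
      intro k
      have hN0 : ((2 * 2 ^ k : ℕ) : ℝ) ≠ 0 := by positivity
      have h1 : w ^ (2 * 2 ^ k) ≤ C * s ^ (2 * 2 ^ k) :=
        (chain ω hω a b hb k).trans
          (mul_le_mul_of_nonneg_left (hms _ (Nat.one_le_iff_ne_zero.mpr (by positivity))) hC0)
      have h2 : C * s ^ (2 * 2 ^ k) = (C ^ ((1 : ℝ) / ((2 * 2 ^ k : ℕ) : ℝ)) * s) ^ (2 * 2 ^ k) := by
        rw [mul_pow]
        congr 1
        rw [← Real.rpow_natCast (C ^ ((1 : ℝ) / ((2 * 2 ^ k : ℕ) : ℝ))) (2 * 2 ^ k),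
          ← Real.rpow_mul hC0, one_div, inv_mul_cancel₀ hN0, Real.rpow_one]
      exact le_of_pow_le_pow_left₀ (by positivity) (by positivity) (h1.trans_eq h2)
    have hNat : Filter.Tendsto (fun k : ℕ => ((2 * 2 ^ k : ℕ) : ℝ)) Filter.atTop Filter.atTop := by
      have h2 : Filter.Tendsto (fun k : ℕ => ((2 : ℝ)) ^ k) Filter.atTop Filter.atTop :=
        tendsto_pow_atTop_atTop_of_one_lt one_lt_two
      have := h2.const_mul_atTop (two_pos (α := ℝ))
      refine this.congr fun k => ?_
      push_cast; ring
    have hexp : Filter.Tendsto (fun k : ℕ => (1 : ℝ) / ((2 * 2 ^ k : ℕ) : ℝ))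
        Filter.atTop (nhds 0) := by
      simp only [one_div]
      exact Filter.Tendsto.comp tendsto_inv_atTop_zero hNat
    have hrp : Filter.Tendsto (fun y : ℝ => C ^ y) (nhds 0) (nhds 1) := by
      have := (Real.continuousAt_const_rpow (ne_of_gt hC) (b := 0)).tendsto
      rwa [Real.rpow_zero] at this
    have htend : Filter.Tendsto (fun k : ℕ => C ^ ((1 : ℝ) / ((2 * 2 ^ k : ℕ) : ℝ)) * s)
        Filter.atTop (nhds s) := by
      have := (hrp.comp hexp).mul_const s
      rwa [one_mul] at this
    have hws : w ≤ s := ge_of_tendsto' htend key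
    calc ENNReal.ofReal w ≤ ENNReal.ofReal s := ENNReal.ofReal_le_ofReal hws
      _ = S2def ω a := ENNReal.ofReal_toReal hS2

lemma m_mono' (n : ℕ) (hn : 1 ≤ n) :
    (ω ((star a * a) ^ n)).re ^ ((1 : ℝ) / n)
      ≤ (ω ((star a * a) ^ (n + 1))).re ^ ((1 : ℝ) / ((n + 1 : ℕ) : ℝ)) := by
  have h := m_mono ω hω a n hn
  rwa [show ((n : ℝ) + 1) = ((n + 1 : ℕ) : ℝ) by push_cast; ring] at h

lemma part3 :
    Filter.Tendsto
      (fun n : ℕ => ENNReal.ofReal ((ω ((star a * a) ^ n)).re ^ ((1 : ℝ) / n)))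
      Filter.atTop (nhds (S2def ω a)) := by
  set f : ℕ → ENNReal :=
    fun n => ENNReal.ofReal ((ω ((star a * a) ^ n)).re ^ ((1 : ℝ) / n)) with hf
  have hmono : Monotone fun k : ℕ => f (k + 1) :=
    monotone_nat_of_le_succ fun k =>
      ENNReal.ofReal_le_ofReal (m_mono' ω hω a (k + 1) (by omega))
  have h1 := tendsto_atTop_iSup hmono
  have h2 : (⨆ k, f (k + 1)) = S2def ω a := by
    apply le_antisymm
    · exact iSup_le fun k => le_iSup_of_le (k + 1) (le_iSup_of_le (by omega) le_rfl)
    · refine iSup₂_le fun n hn => ?_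
      obtain ⟨k, rfl⟩ := Nat.exists_eq_add_of_le hn
      rw [show 1 + k = k + 1 by omega]
      exact le_iSup (fun k => f (k + 1)) k
  rw [h2] at h1
  exact (Filter.tendsto_add_atTop_iff_nat 1).mp h1

end Main

/-- in the commutative case,
`sup{ω(b* a* a b) : ω(b* b) = 1} = sup_{n≥1} ω((a* a)ⁿ)^{1/n} = lim_n ω((a* a)ⁿ)^{1/n}`
in `[0,∞]`, the sequence being non-decreasing. -/
theorem statement7 {A : Type*} [CommRing A] [Algebra ℂ A] [StarRing A] [StarModule ℂ A]
    (ω : A →ₗ[ℂ] ℂ) (hω : AlgState ω) (a : A) :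
    (⨆ (b : A) (_ : ω (star b * b) = 1),
        ENNReal.ofReal ((ω (star b * (star a * a) * b)).re)) =
      (⨆ (n : ℕ) (_ : 1 ≤ n),
        ENNReal.ofReal ((ω ((star a * a) ^ n)).re ^ ((1 : ℝ) / n))) ∧
    (∀ n : ℕ, 1 ≤ n →
      ENNReal.ofReal ((ω ((star a * a) ^ n)).re ^ ((1 : ℝ) / n)) ≤
        ENNReal.ofReal ((ω ((star a * a) ^ (n + 1))).re ^ ((1 : ℝ) / (n + 1)))) ∧
    Filter.Tendsto
      (fun n : ℕ => ENNReal.ofReal ((ω ((star a * a) ^ n)).re ^ ((1 : ℝ) / n)))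
      Filter.atTop
      (nhds (⨆ (n : ℕ) (_ : 1 ≤ n),
        ENNReal.ofReal ((ω ((star a * a) ^ n)).re ^ ((1 : ℝ) / n)))) := by
  refine ⟨le_antisymm (S1_le_S2 ω hω a) (S2_le_S1 ω hω a), ?_, part3 ω hω a⟩
  intro n hn
  exact ENNReal.ofReal_le_ofReal (m_mono ω hω a n hn)
end

section
/- Let (A, Ω) be an abstract O*-algebra. Then (A, Ω) is regular if and only if the cone A^{++} of algebraically positive elements of A, consisting of all finite sums ∑ aᵢ* aᵢ with aᵢ ∈ A, is dense in A⁺ with respect to the weak topology. -/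
open ComplexOrder

variable {A : Type*} [Ring A] [Algebra ℂ A] [StarRing A] [StarModule ℂ A]

set_option linter.unusedSectionVars false

section Aux

lemma starLF_apply' (ω : A →ₗ[ℂ] ℂ) (a : A) :
    starLF ω a = starRingEnd ℂ (ω (star a)) := rfl

lemma starLF_add (ω₁ ω₂ : A →ₗ[ℂ] ℂ) :
    starLF (ω₁ + ω₂) = starLF ω₁ + starLF ω₂ := by
  ext a; simp [starLF_apply']

lemma starLF_starLF (ω : A →ₗ[ℂ] ℂ) : starLF (starLF ω) = ω := by
  ext a; simp [starLF_apply']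

lemma zero_mem_algCone : (0 : A) ∈ algCone A := ⟨0, fun i => 0, by simp⟩

lemma star_mul_self_mem_algCone (b : A) : star b * b ∈ algCone A :=
  ⟨1, fun _ => b, by simp⟩

lemma algCone_add {x y : A} (hx : x ∈ algCone A) (hy : y ∈ algCone A) :
    x + y ∈ algCone A := by
  obtain ⟨n, f, rfl⟩ := hx; obtain ⟨m, g, rfl⟩ := hy
  refine ⟨n + m, Fin.addCases f g, ?_⟩
  rw [Fin.sum_univ_add]
  simp

lemma algCone_smul {x : A} (hx : x ∈ algCone A) {t : ℝ} (ht : 0 ≤ t) :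
    (t : ℂ) • x ∈ algCone A := by
  obtain ⟨n, f, rfl⟩ := hx
  refine ⟨n, fun i => ((Real.sqrt t : ℂ)) • f i, ?_⟩
  rw [Finset.smul_sum]
  refine Finset.sum_congr rfl fun i _ => ?_
  rw [star_smul, smul_mul_smul_comm, Complex.star_def, Complex.conj_ofReal,
    ← Complex.ofReal_mul, Real.mul_self_sqrt ht]

lemma key_sep (𝒜 : AOSA A) (hreg : 𝒜.Regular) {a : A} (ha : a ∈ 𝒜.pos)
    {ι : Type*} [Fintype ι] (ω : ι → (A →ₗ[ℂ] ℂ)) (hω : ∀ i, ω i ∈ 𝒜.Om)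
    (ε : ι → ℝ) (hε : ∀ i, 0 < ε i) :
    ∃ c ∈ algCone A, ∀ i, ‖(ω i) (c - a)‖ < ε i := by
  classical
  by_contra hcon
  push_neg at hcon
  have hne : Nonempty ι := by
    obtain ⟨i, -⟩ := hcon 0 zero_mem_algCone; exact ⟨i⟩
  set T : A →ₗ[ℂ] (ι → ℂ) := LinearMap.pi ω with hT
  set S : Set (ι → ℂ) := closure (T '' algCone A) with hS
  have haS : T a ∉ S := by
    intro h
    rw [Metric.mem_closure_iff] at h
    obtain ⟨δ, hδpos, hδ⟩ : ∃ δ : ℝ, 0 < δ ∧ ∀ i, δ ≤ ε i :=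
      ⟨Finset.univ.inf' Finset.univ_nonempty ε,
        (Finset.lt_inf'_iff _).2 fun i _ => hε i,
        fun i => Finset.inf'_le _ (Finset.mem_univ i)⟩
    obtain ⟨y, ⟨c, hc, rfl⟩, hy⟩ := h δ hδpos
    obtain ⟨i, hi⟩ := hcon c hc
    have h2 : dist (T c i) (T a i) ≤ dist (T a) (T c) := by
      rw [dist_comm (T a) (T c)]; exact dist_le_pi_dist _ _ i
    have h3 : ‖(ω i) (c - a)‖ = dist (T c i) (T a i) := by
      rw [dist_eq_norm]
      congr 1
      simp [hT, LinearMap.pi_apply, map_sub]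
    have := hδ i
    linarith [lt_of_le_of_lt h2 hy, hi, h3]
  have hcv : Convex ℝ (T '' algCone A) := by
    rintro x ⟨c, hc, rfl⟩ y ⟨d, hd, rfl⟩ s t hs ht hst
    refine ⟨(s : ℂ) • c + (t : ℂ) • d,
      algCone_add (algCone_smul hc hs) (algCone_smul hd ht), ?_⟩
    rw [map_add, map_smul, map_smul]
    congr 1 <;> funext i <;>
      simp [Complex.real_smul]
  obtain ⟨f, u, hfa, hfb⟩ :=
    RCLike.geometric_hahn_banach_point_closed (𝕜 := ℂ) hcv.closure isClosed_closure haS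
  simp only [RCLike.re_to_complex] at hfa hfb
  have h0S : (0 : ι → ℂ) ∈ S := subset_closure ⟨0, zero_mem_algCone, map_zero T⟩
  have hu0 : u < 0 := by simpa using hfb 0 h0S
  have hpos : ∀ c ∈ algCone A, 0 ≤ (f (T c)).re := by
    intro c hc
    by_contra hr
    push_neg at hr
    set r := (f (T c)).re with hrdef
    have ht : 0 < 2 * u / r := div_pos_of_neg_of_neg (by linarith) hr
    have hmem : T ((((2 * u / r : ℝ)) : ℂ) • c) ∈ S :=
      subset_closure ⟨_, algCone_smul hc ht.le, rfl⟩
    have h5 := hfb _ hmem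
    rw [map_smul, map_smul, smul_eq_mul, Complex.re_ofReal_mul] at h5
    rw [div_mul_cancel₀ _ (ne_of_lt hr)] at h5
    linarith
  set ρ : A →ₗ[ℂ] ℂ := ∑ i, f (Pi.single i 1) • ω i with hρdef
  have hρOm : ρ ∈ 𝒜.Om :=
    Submodule.sum_mem _ fun i _ => Submodule.smul_mem _ _ (hω i)
  have hρ : ∀ x : A, ρ x = f (T x) := by
    intro x
    have hTx : T x = ∑ i, (ω i x) • (Pi.single i (1 : ℂ) : ι → ℂ) := by
      funext j
      rw [Finset.sum_apply]
      have h6 : ∀ i, ((ω i x) • (Pi.single i (1 : ℂ) : ι → ℂ)) j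
          = (Pi.single i (ω i x) : ι → ℂ) j := by
        intro i
        rw [← Pi.single_smul, smul_eq_mul, mul_one]
      simp_rw [h6]
      rw [← Finset.sum_apply (g := fun i => (Pi.single i (ω i x) : ι → ℂ)),
        Finset.univ_sum_single]
      rfl
    rw [hTx, map_sum]
    rw [hρdef, LinearMap.sum_apply]
    refine Finset.sum_congr rfl fun i _ => ?_
    rw [LinearMap.smul_apply, map_smul, smul_eq_mul, smul_eq_mul, mul_comm]
  set σ : A →ₗ[ℂ] ℂ := ρ + starLF ρ with hσdef
  have hσOm : σ ∈ 𝒜.Om := Submodule.add_mem _ hρOm (𝒜.star_mem _ hρOm)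
  have hσstar : starLF σ = σ := by
    rw [hσdef, starLF_add, starLF_starLF, add_comm]
  have hσval : ∀ x : A, star x = x → σ x = ((2 * (ρ x).re : ℝ) : ℂ) := by
    intro x hx
    rw [hσdef, LinearMap.add_apply, starLF_apply', hx, Complex.add_conj]
  have hσpos : AlgPositive σ := by
    intro b
    have hsb : star (star b * b) = star b * b := by
      rw [star_mul, star_star]
    rw [hσval _ hsb, Complex.zero_le_real]
    have h1 := hpos (star b * b) (star_mul_self_mem_algCone b)
    rw [← hρ] at h1
    linarith
  have hσOmPos := hreg σ hσOm hσstar hσpos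
  have hfin := hσOmPos.2.2 a ha.1 ha.2
  rw [hσval a ha.1, Complex.zero_le_real] at hfin
  have h2 : (ρ a).re < 0 := by
    rw [hρ a]; exact lt_trans hfa hu0
  linarith

end Aux

open Filter Topology

/-- an abstract O*-algebra is regular iff `A⁺⁺` is weakly dense in `A⁺`. -/
theorem statement8 {A : Type*} [Ring A] [Algebra ℂ A] [StarRing A] [StarModule ℂ A]
    (𝒜 : AOSA A) :
    𝒜.Regular ↔ 𝒜.pos ⊆ @closure A 𝒜.weakTop (algCone A) := by
  classical
  constructor
  · -- Regular → dense
    intro hreg a ha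
    letI := 𝒜.weakTop
    rw [mem_closure_iff_nhds]
    intro V hV
    have h𝓝 : (𝓝 a : Filter A)
        = ⨅ s ∈ {s : Set A | a ∈ s ∧ s ∈ {U | ∃ (a₀ : A) (ω : A →ₗ[ℂ] ℂ)
            (_ : ω ∈ 𝒜.Om) (ε : ℝ), 0 < ε ∧ U = {x | ‖ω (x - a₀)‖ < ε}}}, 𝓟 s :=
      TopologicalSpace.nhds_generateFrom
    rw [h𝓝, iInf_subtype'] at hV
    rw [Filter.mem_iInf'] at hV
    obtain ⟨I, hIfin, W, hW, -, hVI, -⟩ := hV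
    haveI := hIfin.fintype
    -- pick the data of each subbasic set
    have hdata : ∀ i : I, ∃ (a₀ : A) (ω : A →ₗ[ℂ] ℂ), ω ∈ 𝒜.Om ∧ ∃ ε : ℝ, 0 < ε ∧
        (i : Set A) = {x | ‖ω (x - a₀)‖ < ε} := by
      rintro ⟨⟨s, hs1, a₀, ω, hω, ε, hε, hseq⟩, hi⟩
      exact ⟨a₀, ω, hω, ε, hε, hseq⟩
    choose a₀ ωf hωf εf hεf hseq using hdata
    have hmem : ∀ i : I, a ∈ (i : Set A) := fun i => i.1.2.1
    set ε' : I → ℝ := fun i => εf i - ‖(ωf i) (a - a₀ i)‖ with hε'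
    have hε'pos : ∀ i, 0 < ε' i := by
      intro i
      have h7 := hmem i
      rw [hseq i] at h7
      simp only [Set.mem_setOf_eq] at h7
      simpa [hε'] using sub_pos.2 h7
    obtain ⟨c, hcC, hc⟩ := key_sep 𝒜 hreg ha ωf hωf ε' hε'pos
    refine ⟨c, ?_, hcC⟩
    rw [hVI]
    refine Set.mem_iInter₂.2 fun i hi => ?_
    refine Filter.mem_principal.1 (hW i) ?_
    -- c ∈ i.1 ⊆ W i
    show c ∈ (i : Set A)
    have hji : ((⟨i, hi⟩ : I) : Set A) = (i : Set A) := rfl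
    rw [← hji, hseq ⟨i, hi⟩]
    set j : I := ⟨i, hi⟩
    have h1 := hc j
    have h2 : (ωf j) (c - a₀ j) = (ωf j) (c - a) + (ωf j) (a - a₀ j) := by
      rw [← map_add]
      congr 1
      abel
    have h3 : ‖(ωf j) (c - a₀ j)‖ ≤ ‖(ωf j) (c - a)‖ + ‖(ωf j) (a - a₀ j)‖ := by
      rw [h2]; exact norm_add_le _ _
    show ‖(ωf j) (c - a₀ j)‖ < εf j
    have := hε'pos j
    simp only [hε'] at h1
    linarith
  · -- dense → Regular
    intro hdense ω hOm hstar hAP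
    refine ⟨hOm, hstar, ?_⟩
    intro a hsa hle
    have haC := hdense ⟨hsa, hle⟩
    by_contra hneg
    have him : (ω a).im = 0 := by
      have h1 : starLF ω a = ω a := by rw [hstar]
      rw [starLF_apply', hsa.star_eq] at h1
      have := congrArg Complex.im h1
      simp only [Complex.conj_im] at this
      clear hneg
      linarith
    have hre : (ω a).re < 0 := by
      by_contra h
      push_neg at h
      exact hneg (Complex.le_def.2 ⟨by simpa using h, by simpa using him.symm⟩)
    clear hneg
    set ε : ℝ := -(ω a).re with hεdef
    letI := 𝒜.weakTop
    rw [mem_closure_iff] at haC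
    have hopen : IsOpen {x : A | ‖ω (x - a)‖ < ε} :=
      TopologicalSpace.isOpen_generateFrom_of_mem
        ⟨a, ω, hOm, ε, by simpa [hεdef] using hre, rfl⟩
    obtain ⟨c, hc1, hc2⟩ := haC _ hopen (by simp only [Set.mem_setOf_eq, sub_self, map_zero, norm_zero]; linarith)
    obtain ⟨n, g, rfl⟩ := hc2
    have hωc : (0 : ℂ) ≤ ω (∑ i, star (g i) * g i) := by
      rw [map_sum]
      exact Finset.sum_nonneg fun i _ => hAP (g i)
    rw [Complex.le_def] at hωc
    have h4 : ε ≤ ‖ω (∑ i, star (g i) * g i - a)‖ := by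
      rw [map_sub]
      calc ε ≤ (ω (∑ i, star (g i) * g i) - ω a).re := by
              simp only [Complex.sub_re]
              have := hωc.1
              simp only [Complex.zero_re] at this
              linarith
        _ ≤ ‖ω (∑ i, star (g i) * g i) - ω a‖ := Complex.re_le_norm _
        _ = ‖ω (∑ i, star (g i) * g i) - ω a‖ := rfl
    have h5 : ‖ω (∑ i, star (g i) * g i - a)‖ < ε := hc1
    linarith
end

section
/- Let (A, Ω) be a regular commutative abstract O*-algebra and ω a pure state of (A, Ω). Then the restriction of ω to the unital *-subalgebra B_ω(A,Ω) of elements for which ω is bounded is multiplicative: ω(a b) = ω(a) ω(b) for all a, b ∈ B_ω(A,Ω). -/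
open ComplexOrder

variable {A : Type*} [Ring A] [Algebra ℂ A] [StarRing A] [StarModule ℂ A]

section Statement9Helpers

variable {A : Type*} [CommRing A] [Algebra ℂ A] [StarRing A] [StarModule ℂ A]

set_option linter.unusedSectionVars false

lemma expand_aux9 (ω : A →ₗ[ℂ] ℂ) (p x y : A) (t : ℂ) :
    ω (star (x + t • y) * p * (x + t • y)) =
      ω (star x * p * x) + t * ω (star x * p * y)
        + (starRingEnd ℂ t) * ω (star y * p * x)
        + ((starRingEnd ℂ t) * t) * ω (star y * p * y) := by
  have h : star (x + t • y) * p * (x + t • y) =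
      star x * p * x + t • (star x * p * y) + (starRingEnd ℂ t) • (star y * p * x)
        + ((starRingEnd ℂ t) * t) • (star y * p * y) := by
    simp only [star_add, star_smul, add_mul, mul_add, smul_mul_assoc, mul_smul_comm,
      smul_smul, Complex.star_def]
    ring_nf
    module
  rw [h]
  simp only [map_add, map_smul, smul_eq_mul]

lemma symm_aux9 (ω : A →ₗ[ℂ] ℂ) (hherm : ∀ a : A, ω (star a) = starRingEnd ℂ (ω a))
    (p : A) (hp : star p = p) (x y : A) :
    ω (star y * p * x) = starRingEnd ℂ (ω (star x * p * y)) := by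
  rw [← hherm]
  congr 1
  simp only [star_mul, star_star, hp]
  ring

lemma real_of_nonneg9 {z : ℂ} (h : 0 ≤ z) : z = (z.re : ℂ) ∧ 0 ≤ z.re := by
  rw [Complex.le_def] at h
  exact ⟨Complex.ext rfl (by simpa using h.2.symm), by simpa using h.1⟩

/-- Cauchy–Schwarz for the positive sesquilinear form `(x,y) ↦ ω (x* p y)`. -/
lemma cs_aux9 (ω : A →ₗ[ℂ] ℂ) (hherm : ∀ a : A, ω (star a) = starRingEnd ℂ (ω a))
    (p : A) (hp : star p = p) (hpos : ∀ x : A, 0 ≤ ω (star x * p * x)) (x y : A) :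
    Complex.normSq (ω (star x * p * y)) ≤ (ω (star x * p * x)).re * (ω (star y * p * y)).re := by
  set c := ω (star x * p * y) with hc
  set X := (ω (star x * p * x)).re
  set Y := (ω (star y * p * y)).re
  have hX : 0 ≤ X := (real_of_nonneg9 (hpos x)).2
  have hY : 0 ≤ Y := (real_of_nonneg9 (hpos y)).2
  have key : ∀ s : ℝ, 0 ≤ X - 2 * s * Complex.normSq c + s ^ 2 * Complex.normSq c * Y := by
    intro s
    have h0 := hpos (x + (-(s : ℂ) * starRingEnd ℂ c) • y)
    rw [expand_aux9, symm_aux9 ω hherm p hp x y] at h0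
    rw [(real_of_nonneg9 (hpos x)).1, (real_of_nonneg9 (hpos y)).1, ← hc] at h0
    have hcc : starRingEnd ℂ c * c = (Complex.normSq c : ℂ) := by
      rw [mul_comm]; exact Complex.mul_conj c
    have e : (X:ℂ) + (-(s : ℂ) * starRingEnd ℂ c) * c
        + (starRingEnd ℂ (-(s : ℂ) * starRingEnd ℂ c)) * starRingEnd ℂ c
        + ((starRingEnd ℂ (-(s : ℂ) * starRingEnd ℂ c)) * (-(s : ℂ) * starRingEnd ℂ c)) * (Y:ℂ)
        = ((X - 2*s*Complex.normSq c + s^2*Complex.normSq c*Y : ℝ) : ℂ) := by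
      simp only [map_mul, map_neg, Complex.conj_conj, Complex.conj_ofReal]
      push_cast
      linear_combination ((s:ℂ)^2*(Y:ℂ) - 2*(s:ℂ)) * hcc
    rw [e] at h0
    exact_mod_cast h0
  by_cases hn : Complex.normSq c = 0
  · rw [hn]; nlinarith
  · have hn' : 0 < Complex.normSq c := lt_of_le_of_ne (Complex.normSq_nonneg c) (Ne.symm hn)
    rcases eq_or_lt_of_le hY with hY0 | hY0
    · exfalso
      have h := key ((X + 1) / (2 * Complex.normSq c))
      rw [← hY0] at h
      rw [div_pow] at h
      have h2 : (X + 1) / (2 * Complex.normSq c) * Complex.normSq c = (X+1)/2 := by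
        field_simp
      nlinarith [h2, hn']
    · have k := key (1 / Y)
      have h1 : (1 / Y) * Y = 1 := one_div_mul_cancel hY0.ne'
      have e : Y * (X - 2 * (1 / Y) * Complex.normSq c
          + (1 / Y) ^ 2 * Complex.normSq c * Y) = X * Y - Complex.normSq c := by
        field_simp
        ring
      nlinarith [mul_nonneg hY0.le k, e]

lemma cs1_9 (ω : A →ₗ[ℂ] ℂ) (hherm : ∀ a : A, ω (star a) = starRingEnd ℂ (ω a))
    (hpos : AlgPositive ω) (x y : A) :
    Complex.normSq (ω (star x * y)) ≤ (ω (star x * x)).re * (ω (star y * y)).re := by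
  have := cs_aux9 ω hherm 1 (star_one A) (fun z => by simpa [mul_one] using hpos z) x y
  simpa [mul_one] using this

lemma opNorm_bound9 (ω : A →ₗ[ℂ] ℂ) (hherm : ∀ a : A, ω (star a) = starRingEnd ℂ (ω a))
    (hpos : AlgPositive ω) {a : A} (ha : opNorm ω a ≠ ⊤) :
    ∃ M : ℝ, 0 < M ∧ ∀ b : A, (ω (star (a * b) * (a * b))).re ≤ M ^ 2 * (ω (star b * b)).re := by
  set N := (opNorm ω a).toReal with hN
  have hN0 : 0 ≤ N := ENNReal.toReal_nonneg
  have hsup : ∀ b : A, ω (star b * b) = 1 → (ω (star (a * b) * (a * b))).re ≤ N ^ 2 := by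
    intro b hb
    have h1 : ENNReal.ofReal (Real.sqrt ((ω (star b * (star a * a) * b)).re)) ≤ opNorm ω a :=
      le_iSup₂ (f := fun (b : A) (_ : ω (star b * b) = 1) =>
        ENNReal.ofReal (Real.sqrt ((ω (star b * (star a * a) * b)).re))) b hb
    have h2 := ENNReal.toReal_mono ha h1
    rw [ENNReal.toReal_ofReal (Real.sqrt_nonneg _)] at h2
    have hnn : 0 ≤ (ω (star (a * b) * (a * b))).re := (real_of_nonneg9 (hpos (a * b))).2
    have hre : star b * (star a * a) * b = star (a * b) * (a * b) := by
      rw [star_mul]; ring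
    rw [hre] at h2
    calc (ω (star (a * b) * (a * b))).re
        = Real.sqrt ((ω (star (a * b) * (a * b))).re) ^ 2 := (Real.sq_sqrt hnn).symm
      _ ≤ N ^ 2 := by gcongr
  refine ⟨N + 1, by positivity, fun b => ?_⟩
  obtain ⟨hbr, hr0⟩ := real_of_nonneg9 (hpos b)
  set r := (ω (star b * b)).re with hr
  rcases eq_or_lt_of_le hr0 with h0 | h0
  · have hz : ω (star b * ((star a * a) * b)) = 0 := by
      have := cs1_9 ω hherm hpos b ((star a * a) * b)
      rw [← hr, ← h0] at this
      simpa using Complex.normSq_eq_zero.mp (le_antisymm (by simpa using this)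
        (Complex.normSq_nonneg _))
    have he : star (a * b) * (a * b) = star b * ((star a * a) * b) := by
      rw [star_mul]; ring
    rw [he, hz]
    simp [← h0]
  · set s := (Real.sqrt r)⁻¹ with hs
    have hrt : 0 < Real.sqrt r := Real.sqrt_pos.mpr h0
    have hsq : Real.sqrt r * Real.sqrt r = r := Real.mul_self_sqrt hr0
    have hsr : s * s * r = 1 := by
      rw [hs]
      field_simp
      rw [Real.sq_sqrt hr0]
    have hb1 : ω (star ((s:ℂ) • b) * ((s:ℂ) • b)) = 1 := by
      simp only [star_smul, Complex.star_def, Complex.conj_ofReal, smul_mul_assoc,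
        mul_smul_comm, smul_smul, map_smul, smul_eq_mul, hbr]
      norm_cast
    have h3 := hsup ((s:ℂ) • b) hb1
    have he : a * ((s:ℂ) • b) = (s:ℂ) • (a * b) := by rw [mul_smul_comm]
    rw [he] at h3
    have h4 : (ω (star ((s:ℂ) • (a*b)) * ((s:ℂ) • (a*b)))).re
        = s * s * (ω (star (a*b) * (a*b))).re := by
      simp only [star_smul, Complex.star_def, Complex.conj_ofReal, smul_mul_assoc,
        mul_smul_comm, smul_smul, map_smul, smul_eq_mul]
      rw [mul_assoc, Complex.re_ofReal_mul, Complex.re_ofReal_mul]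
      ring
    rw [h4] at h3
    have hL0 : 0 ≤ (ω (star (a*b) * (a*b))).re := (real_of_nonneg9 (hpos (a*b))).2
    have h5 : (s*s*r) * (ω (star (a*b) * (a*b))).re = (ω (star (a*b) * (a*b))).re := by
      rw [hsr]; ring
    nlinarith [mul_le_mul_of_nonneg_right h3 hr0, h5, hL0, hN0, h0]

end Statement9Helpers


section Statement9Core

variable {A : Type*} [CommRing A] [Algebra ℂ A] [StarRing A] [StarModule ℂ A]

set_option linter.unusedSectionVars false

lemma herm_mult9 (𝒜 : AOSA A) (hreg : 𝒜.Regular) (ω : A →ₗ[ℂ] ℂ) (hω : 𝒜.IsPureState ω)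
    (hherm : ∀ u : A, ω (star u) = starRingEnd ℂ (ω u)) (hpos : AlgPositive ω)
    (h : A) (hh : star h = h) (M : ℝ) (hM : 0 < M)
    (hb : ∀ b : A, (ω (star (h * b) * (h * b))).re ≤ M ^ 2 * (ω (star b * b)).re) :
    ∀ x : A, ω (h * x) = ω h * ω x := by
  obtain ⟨⟨⟨hΩ, hst, hposA⟩, hone⟩, hpure⟩ := hω
  -- ω (b* h b) is real
  have hzreal : ∀ b : A, ω (star b * h * b) = ((ω (star b * h * b)).re : ℂ) := by
    intro b
    have h1 := symm_aux9 ω hherm h hh b b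
    exact (Complex.conj_eq_iff_re.mp h1.symm).symm
  -- and bounded by M ω(b* b)
  have hzbound : ∀ b : A, |(ω (star b * h * b)).re| ≤ M * (ω (star b * b)).re := by
    intro b
    have hcs := cs1_9 ω hherm hpos b (h * b)
    rw [← mul_assoc] at hcs
    have h2 := hb b
    have hr0 : 0 ≤ (ω (star b * b)).re := (real_of_nonneg9 (hpos b)).2
    have hns : Complex.normSq (ω (star b * h * b)) = (ω (star b * h * b)).re ^ 2 := by
      rw [hzreal b]
      simp [Complex.normSq_apply]
      ring
    rw [hns] at hcs
    have hsq : (ω (star b * h * b)).re ^ 2 ≤ (M * (ω (star b * b)).re) ^ 2 := by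
      nlinarith [mul_le_mul_of_nonneg_left h2 hr0]
    rw [abs_le]
    exact abs_le_of_sq_le_sq' hsq (by positivity)
  -- the element c = h/(2M) + 1/2
  set α : ℂ := (((2*M)⁻¹ : ℝ) : ℂ) with hα
  set c : A := α • h + ((1/2 : ℝ) : ℂ) • 1 with hcdef
  have hcstar : star c = c := by
    rw [hcdef, hα]
    simp [star_add, star_smul, Complex.star_def, Complex.conj_ofReal, hh]
  have hcb : ∀ b : A, ω (star b * c * b)
      = (((ω (star b * h * b)).re/(2*M) + (ω (star b * b)).re/2 : ℝ) : ℂ) := by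
    intro b
    have e : star b * c * b = α • (star b * h * b) + ((1/2 : ℝ) : ℂ) • (star b * b) := by
      rw [hcdef]
      simp only [mul_add, add_mul, smul_mul_assoc, mul_smul_comm, mul_one]
    rw [e, map_add, map_smul, map_smul, hzreal b, (real_of_nonneg9 (hpos b)).1, hα]
    push_cast
    have hM' : (M:ℂ) ≠ 0 := by exact_mod_cast hM.ne'
    field_simp
    simp only [Complex.ofReal_re, smul_eq_mul]
    linear_combination ((ω (star b * h * b)).re : ℂ) * mul_one_div_cancel (mul_ne_zero two_ne_zero hM')
  have P1 : ∀ b : A, 0 ≤ ω (star b * c * b) := by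
    intro b
    rw [hcb b]
    rw [Complex.zero_le_real]
    have h1 := hzbound b
    have hr0 : 0 ≤ (ω (star b * b)).re := (real_of_nonneg9 (hpos b)).2
    rw [abs_le] at h1
    have key : 0 ≤ ((ω (star b * h * b)).re + M * (ω (star b * b)).re) / (2*M) :=
      div_nonneg (by linarith [h1.1]) (by positivity)
    have e2 : ((ω (star b * h * b)).re + M * (ω (star b * b)).re) / (2*M)
        = (ω (star b * h * b)).re/(2*M) + (ω (star b * b)).re/2 := by
      field_simp
    linarith [e2 ▸ key]
  have P2 : ∀ b : A, 0 ≤ ω (star b * (1 - c) * b) := by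
    intro b
    have e : star b * (1 - c) * b = star b * b - star b * c * b := by ring
    rw [e, map_sub, hcb b]
    nth_rewrite 1 [(real_of_nonneg9 (hpos b)).1]
    have h1 := hzbound b
    rw [abs_le] at h1
    have key : 0 ≤ ((ω (star b * b)).re * M - (ω (star b * h * b)).re) / (2*M) :=
      div_nonneg (by linarith [h1.2]) (by positivity)
    have e2 : ((ω (star b * b)).re * M - (ω (star b * h * b)).re) / (2*M)
        = (ω (star b * b)).re - ((ω (star b * h * b)).re/(2*M) + (ω (star b * b)).re/2) := by
      field_simp
      ring
    rw [← Complex.ofReal_sub]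
    exact Complex.zero_le_real.mpr (by linarith [key, e2])
  -- the functionals ρ' = ω(c ·) and σ' = ω((1-c) ·)
  set ρ' : A →ₗ[ℂ] ℂ := bimodLF 1 c ω with hρ'def
  set σ' : A →ₗ[ℂ] ℂ := bimodLF 1 (1 - c) ω with hσ'def
  have hρ'x : ∀ x : A, ρ' x = ω (c * x) := fun x => by simp [hρ'def, bimodLF]
  have hσ'x : ∀ x : A, σ' x = ω ((1 - c) * x) := fun x => by simp [hσ'def, bimodLF]
  have hρ'mem : ρ' ∈ 𝒜.Om := 𝒜.bimod_mem ω hΩ 1 c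
  have hσ'mem : σ' ∈ 𝒜.Om := 𝒜.bimod_mem ω hΩ 1 (1 - c)
  have hstar_gen : ∀ d : A, star d = d → starLF (bimodLF 1 d ω) = bimodLF 1 d ω := by
    intro d hd
    apply LinearMap.ext
    intro u
    show starRingEnd ℂ (ω (d * star u * 1)) = ω (d * u * 1)
    rw [← hherm (d * star u * 1)]
    congr 1
    simp only [star_mul, star_star, star_one, hd]
    ring
  have hρ'star : starLF ρ' = ρ' := hstar_gen c hcstar
  have hσ'star : starLF σ' = σ' := hstar_gen (1 - c) (by simp [star_sub, hcstar])
  have hρ'alg : AlgPositive ρ' := by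
    intro x
    rw [hρ'x]
    have e : c * (star x * x) = star x * c * x := by ring
    rw [e]
    exact P1 x
  have hσ'alg : AlgPositive σ' := by
    intro x
    rw [hσ'x]
    have e : (1 - c) * (star x * x) = star x * (1 - c) * x := by ring
    rw [e]
    exact P2 x
  have hρ'pos : ρ' ∈ 𝒜.OmPos := hreg ρ' hρ'mem hρ'star hρ'alg
  have hσ'pos : σ' ∈ 𝒜.OmPos := hreg σ' hσ'mem hσ'star hσ'alg
  -- ω c is real, in [0,1]
  have hwc0 : 0 ≤ ω c := by
    have := P1 1
    simpa using this
  have hwc1 : 0 ≤ 1 - ω c := by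
    have := P2 1
    simp only [star_one, one_mul, mul_one] at this
    rw [map_sub, hone] at this
    exact this
  set t : ℝ := (ω c).re with ht
  have hwct : ω c = (t : ℂ) := (real_of_nonneg9 hwc0).1
  have ht0 : 0 ≤ t := (real_of_nonneg9 hwc0).2
  have ht1 : t ≤ 1 := by
    have h2 := (real_of_nonneg9 hwc1).2
    simp only [Complex.sub_re, Complex.one_re] at h2
    linarith
  -- key multiplicativity for c
  have hkey : ∀ x : A, ω (c * x) = ω c * ω x := by
    rcases eq_or_lt_of_le ht0 with hz | hz
    · -- t = 0
      intro x
      have hp1 : ∀ u : A, 0 ≤ ω (star u * c * u) := P1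
      have hcs := cs_aux9 ω hherm c hcstar hp1 1 x
      have e0 : (ω (star (1:A) * c * 1)).re = 0 := by
        simp only [star_one, one_mul, mul_one]
        rw [← ht, ← hz]
      rw [e0, zero_mul] at hcs
      have : ω (star (1:A) * c * x) = 0 :=
        Complex.normSq_eq_zero.mp (le_antisymm hcs (Complex.normSq_nonneg _))
      rw [star_one, one_mul] at this
      rw [this, hwct, ← hz]
      simp
    rcases eq_or_lt_of_le ht1 with ho | ho
    · -- t = 1
      intro x
      have hp2 : ∀ u : A, 0 ≤ ω (star u * (1 - c) * u) := P2
      have hcs := cs_aux9 ω hherm (1 - c) (by simp [star_sub, hcstar]) hp2 1 x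
      have e0 : (ω (star (1:A) * (1 - c) * 1)).re = 0 := by
        simp only [star_one, one_mul, mul_one]
        rw [map_sub, hone, hwct, ho]
        simp
      rw [e0, zero_mul] at hcs
      have h3 : ω (star (1:A) * (1 - c) * x) = 0 :=
        Complex.normSq_eq_zero.mp (le_antisymm hcs (Complex.normSq_nonneg _))
      rw [star_one, one_mul, sub_mul, one_mul, map_sub, sub_eq_zero] at h3
      rw [← h3, hwct, ho]
      norm_num
    · -- 0 < t < 1
      set ρ₁ : A →ₗ[ℂ] ℂ := ((t⁻¹ : ℝ) : ℂ) • ρ' with hρ₁def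
      set ρ₂ : A →ₗ[ℂ] ℂ := (((1-t)⁻¹ : ℝ) : ℂ) • σ' with hρ₂def
      have hsmul_star : ∀ (s : ℝ) (f : A →ₗ[ℂ] ℂ), starLF f = f →
          starLF (((s:ℝ):ℂ) • f) = ((s:ℝ):ℂ) • f := by
        intro s f hf
        apply LinearMap.ext
        intro u
        show starRingEnd ℂ (((s:ℂ) • f) (star u)) = ((s:ℂ) • f) u
        simp only [LinearMap.smul_apply, smul_eq_mul, map_mul, Complex.conj_ofReal]
        congr 1
        exact DFunLike.congr_fun hf u
      have hs1 : ρ₁ ∈ 𝒜.States := by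
        refine ⟨⟨Submodule.smul_mem _ _ hρ'mem, hsmul_star t⁻¹ ρ' hρ'star, ?_⟩, ?_⟩
        · intro u hu hle
          have h4 := hρ'pos.2.2 u hu hle
          exact mul_nonneg (Complex.zero_le_real.mpr (inv_nonneg.mpr hz.le)) h4
        · show ((t⁻¹:ℝ):ℂ) * ρ' 1 = 1
          rw [hρ'x, mul_one, hwct]
          norm_cast
          field_simp
      have hs2 : ρ₂ ∈ 𝒜.States := by
        refine ⟨⟨Submodule.smul_mem _ _ hσ'mem, hsmul_star (1-t)⁻¹ σ' hσ'star, ?_⟩, ?_⟩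
        · intro u hu hle
          have h4 := hσ'pos.2.2 u hu hle
          exact mul_nonneg (Complex.zero_le_real.mpr
            (inv_nonneg.mpr (by linarith : (0:ℝ) ≤ 1 - t))) h4
        · show (((1-t)⁻¹:ℝ):ℂ) * σ' 1 = 1
          rw [hσ'x, mul_one, map_sub, hone, hwct]
          have e1 : (1:ℂ) - (t:ℂ) = ((1 - t : ℝ):ℂ) := by push_cast; ring
          rw [e1]
          exact_mod_cast inv_mul_cancel₀ (by linarith : (1:ℝ) - t ≠ 0)
      have htt : (t:ℂ) * ((t⁻¹:ℝ):ℂ) = 1 := by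
        norm_cast
        field_simp
      have h1t : ((1-t:ℝ):ℂ) * (((1-t)⁻¹:ℝ):ℂ) = 1 := by
        norm_cast
        rw [mul_inv_cancel₀ (by linarith : (1:ℝ) - t ≠ 0)]
      have hdecomp : ω = (t : ℂ) • ρ₁ + ((1 - t : ℝ) : ℂ) • ρ₂ := by
        apply LinearMap.ext
        intro u
        show ω u = (t:ℂ) * (((t⁻¹:ℝ):ℂ) * ρ' u) + ((1-t:ℝ):ℂ) * ((((1-t)⁻¹:ℝ):ℂ) * σ' u)
        rw [← mul_assoc, ← mul_assoc, htt, h1t, one_mul, one_mul, hρ'x, hσ'x, ← map_add]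
        congr 1
        ring
      obtain ⟨he1, _⟩ := hpure ρ₁ hs1 ρ₂ hs2 t hz ho hdecomp
      intro x
      have h5 := DFunLike.congr_fun he1 x
      show ω (c * x) = ω c * ω x
      rw [hwct]
      have h6 : ((t⁻¹:ℝ):ℂ) * ρ' x = ω x := h5
      rw [hρ'x] at h6
      have h7 : (t:ℂ) * (((t⁻¹:ℝ):ℂ) * ω (c * x)) = (t:ℂ) * ω x := by rw [h6]
      rw [← mul_assoc, htt, one_mul] at h7
      exact h7
  -- conclude for h
  have hcx : ∀ x : A, ω (c * x) = α * ω (h * x) + ((1/2:ℝ):ℂ) * ω x := by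
    intro x
    have e : c * x = α • (h * x) + ((1/2:ℝ):ℂ) • x := by
      rw [hcdef]
      simp only [add_mul, smul_mul_assoc, one_mul]
    rw [e, map_add, map_smul, map_smul, smul_eq_mul, smul_eq_mul]
  have hc1 : ω c = α * ω h + ((1/2:ℝ):ℂ) := by
    have := hcx 1
    rw [mul_one, mul_one, hone, mul_one] at this
    exact this
  intro x
  have h8 := hkey x
  rw [hcx x, hc1] at h8
  have hα0 : α ≠ 0 := by
    rw [hα]
    simp only [ne_eq, Complex.ofReal_eq_zero]
    positivity
  apply mul_left_cancel₀ hα0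
  linear_combination h8

end Statement9Core


section Statement9Final

variable {A : Type*} [CommRing A] [Algebra ℂ A] [StarRing A] [StarModule ℂ A]

set_option linter.unusedSectionVars false

lemma nu_smul9 (ω : A →ₗ[ℂ] ℂ) (s : ℂ) (x : A) :
    (ω (star (s • x) * (s • x))).re = Complex.normSq s * (ω (star x * x)).re := by
  have e : star (s • x) * (s • x) = ((Complex.normSq s : ℂ)) • (star x * x) := by
    rw [star_smul, smul_mul_assoc, mul_smul_comm, smul_smul, Complex.star_def,
      Complex.normSq_eq_conj_mul_self]
  rw [e, map_smul, smul_eq_mul, Complex.re_ofReal_mul]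

lemma nu_add9 (ω : A →ₗ[ℂ] ℂ) (hherm : ∀ u : A, ω (star u) = starRingEnd ℂ (ω u))
    (hpos : AlgPositive ω) (x y : A) :
    Real.sqrt ((ω (star (x + y) * (x + y))).re)
      ≤ Real.sqrt ((ω (star x * x)).re) + Real.sqrt ((ω (star y * y)).re) := by
  set X := (ω (star x * x)).re with hX
  set Y := (ω (star y * y)).re with hY
  have hX0 : 0 ≤ X := (real_of_nonneg9 (hpos x)).2
  have hY0 : 0 ≤ Y := (real_of_nonneg9 (hpos y)).2
  have hyx : ω (star y * x) = starRingEnd ℂ (ω (star x * y)) := by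
    rw [← hherm (star x * y)]
    congr 1
    rw [star_mul, star_star]
  have e : star (x + y) * (x + y) = star x * x + star x * y + star y * x + star y * y := by
    rw [star_add]; ring
  have hre : (ω (star (x + y) * (x + y))).re = X + 2 * (ω (star x * y)).re + Y := by
    rw [e, map_add, map_add, map_add, hyx]
    simp only [Complex.add_re, Complex.conj_re, hX, hY]
    ring
  have hcs := cs1_9 ω hherm hpos x y
  have h1 : (ω (star x * y)).re ≤ Real.sqrt X * Real.sqrt Y := by
    calc (ω (star x * y)).re ≤ |(ω (star x * y)).re| := le_abs_self _
      _ ≤ ‖ω (star x * y)‖ := Complex.abs_re_le_norm _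
      _ = Real.sqrt (Complex.normSq (ω (star x * y))) := by rw [Complex.norm_def]
      _ ≤ Real.sqrt (X * Y) := Real.sqrt_le_sqrt hcs
      _ = Real.sqrt X * Real.sqrt Y := Real.sqrt_mul hX0 Y
  have h2 : (ω (star (x + y) * (x + y))).re ≤ (Real.sqrt X + Real.sqrt Y) ^ 2 := by
    rw [hre]
    have := Real.sq_sqrt hX0
    have := Real.sq_sqrt hY0
    nlinarith [h1]
  calc Real.sqrt ((ω (star (x + y) * (x + y))).re)
      ≤ Real.sqrt ((Real.sqrt X + Real.sqrt Y) ^ 2) := Real.sqrt_le_sqrt h2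
    _ = Real.sqrt X + Real.sqrt Y := Real.sqrt_sq (by positivity)

end Statement9Final

/-- a pure state of a regular commutative abstract O*-algebra is
multiplicative on the subalgebra of elements for which it is bounded. -/
theorem statement9 {A : Type*} [CommRing A] [Algebra ℂ A] [StarRing A] [StarModule ℂ A]
    (𝒜 : AOSA A) (hreg : 𝒜.Regular) (ω : A →ₗ[ℂ] ℂ) (hω : 𝒜.IsPureState ω) :
    ∀ a b : A, opNorm ω a ≠ ⊤ → opNorm ω b ≠ ⊤ → ω (a * b) = ω a * ω b := by
  intro a b ha _
  -- basic facts about the state ω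
  have hst : starLF ω = ω := hω.1.1.2.1
  have hherm : ∀ u : A, ω (star u) = starRingEnd ℂ (ω u) := by
    intro u
    have h1 : starRingEnd ℂ (ω (star u)) = ω u := DFunLike.congr_fun hst u
    rw [← h1, Complex.conj_conj]
  have hpos : AlgPositive ω := by
    intro u
    apply hω.1.1.2.2 (star u * u) (IsSelfAdjoint.star_mul_self u)
    have := 𝒜.conj_le 0 1 u (IsSelfAdjoint.zero A) (IsSelfAdjoint.one A) 𝒜.zero_le_one
    simpa using this
  obtain ⟨M, hM, hMb⟩ := opNorm_bound9 ω hherm hpos ha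
  suffices H : ∀ x : A, ω (a * x) = ω a * ω x from H b
  -- Hermitian decomposition a = h + i k
  set h : A := ((1/2 : ℂ)) • (a + star a) with hhdef
  set k : A := ((Complex.I/2)) • (star a - a) with hkdef
  have hIhalf : Complex.I * (Complex.I / 2) = -(1/2 : ℂ) := by
    rw [mul_div_assoc', Complex.I_mul_I]
    ring
  have hah : a = h + Complex.I • k := by
    rw [hhdef, hkdef, smul_smul, hIhalf]
    module
  have hstar_h : star h = h := by
    rw [hhdef]
    simp only [star_smul, star_add, star_star, Complex.star_def, map_div₀, map_one, map_ofNat]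
    rw [add_comm (star a) a]
  have hstar_k : star k = k := by
    rw [hkdef]
    simp only [star_smul, star_sub, star_star, Complex.star_def, map_div₀, map_ofNat,
      Complex.conj_I]
    module
  -- square-root form of the bounds
  have hsqrt : ∀ u : A, (∀ c : A, (ω (star (u*c) * (u*c))).re ≤ M^2 * (ω (star c * c)).re) →
      ∀ c : A, Real.sqrt ((ω (star (u*c) * (u*c))).re)
        ≤ M * Real.sqrt ((ω (star c * c)).re) := by
    intro u hu c
    calc Real.sqrt ((ω (star (u*c) * (u*c))).re)
        ≤ Real.sqrt (M^2 * (ω (star c * c)).re) := Real.sqrt_le_sqrt (hu c)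
      _ = M * Real.sqrt ((ω (star c * c)).re) := by
          rw [Real.sqrt_mul (sq_nonneg M), Real.sqrt_sq hM.le]
  have hMa' : ∀ c : A, (ω (star (star a * c) * (star a * c))).re
      ≤ M^2 * (ω (star c * c)).re := by
    intro c
    rw [show star (star a * c) * (star a * c) = star (a*c) * (a*c) by
      rw [star_mul, star_mul, star_star]; ring]
    exact hMb c
  have hMneg : ∀ c : A, (ω (star ((-a) * c) * ((-a) * c))).re
      ≤ M^2 * (ω (star c * c)).re := by
    intro c
    rw [show star ((-a) * c) * ((-a) * c) = star (a*c) * (a*c) by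
      simp [neg_mul, star_neg]]
    exact hMb c
  -- the combined bound for s • (u + v) with |s|² = 1/4
  have hbnd : ∀ (s : ℂ) (u v : A), Complex.normSq s = 1/4 →
      (∀ c, (ω (star (u*c) * (u*c))).re ≤ M^2 * (ω (star c * c)).re) →
      (∀ c, (ω (star (v*c) * (v*c))).re ≤ M^2 * (ω (star c * c)).re) →
      ∀ c, (ω (star ((s • (u + v)) * c) * ((s • (u + v)) * c))).re
        ≤ M^2 * (ω (star c * c)).re := by
    intro s u v hns hu hv c
    have e : (s • (u + v)) * c = s • (u*c + v*c) := by
      rw [smul_mul_assoc, add_mul]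
    rw [e, nu_smul9, hns]
    have t1 := nu_add9 ω hherm hpos (u*c) (v*c)
    have t2 := hsqrt u hu c
    have t3 := hsqrt v hv c
    have hS0 : 0 ≤ (ω (star (u*c + v*c) * (u*c + v*c))).re := (real_of_nonneg9 (hpos _)).2
    have hr0 : 0 ≤ (ω (star c * c)).re := (real_of_nonneg9 (hpos c)).2
    have hst2 : Real.sqrt ((ω (star (u*c + v*c) * (u*c + v*c))).re)
        ≤ 2 * M * Real.sqrt ((ω (star c * c)).re) := by linarith
    nlinarith [mul_self_le_mul_self (Real.sqrt_nonneg
        ((ω (star (u*c + v*c) * (u*c + v*c))).re)) hst2,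
      Real.sq_sqrt hS0, Real.sq_sqrt hr0, Real.sqrt_nonneg ((ω (star c * c)).re)]
  have hns_half : Complex.normSq (1/2 : ℂ) = 1/4 := by
    rw [show (1/2 : ℂ) = ((1/2 : ℝ) : ℂ) by norm_num, Complex.normSq_ofReal]
    norm_num
  have hns_I : Complex.normSq (Complex.I/2 : ℂ) = 1/4 := by
    rw [show (Complex.I/2 : ℂ) = Complex.I * ((1/2 : ℝ) : ℂ) by push_cast; ring,
      Complex.normSq_mul, Complex.normSq_I, Complex.normSq_ofReal]
    norm_num
  have hbh : ∀ c : A, (ω (star (h*c) * (h*c))).re ≤ M^2 * (ω (star c * c)).re := by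
    intro c
    rw [hhdef]
    exact hbnd (1/2 : ℂ) a (star a) hns_half hMb hMa' c
  have hbk : ∀ c : A, (ω (star (k*c) * (k*c))).re ≤ M^2 * (ω (star c * c)).re := by
    intro c
    rw [hkdef, sub_eq_add_neg]
    exact hbnd (Complex.I/2) (star a) (-a) hns_I hMa' hMneg c
  -- apply the purity lemma to h and k, and conclude
  have Hh := herm_mult9 𝒜 hreg ω hω hherm hpos h hstar_h M hM hbh
  have Hk := herm_mult9 𝒜 hreg ω hω hherm hpos k hstar_k M hM hbk
  intro x
  have e : a * x = h*x + Complex.I • (k*x) := by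
    conv_lhs => rw [hah]
    rw [add_mul, smul_mul_assoc, smul_mul_assoc]
  have ea : ω a = ω h + Complex.I * ω k := by
    conv_lhs => rw [hah]
    simp only [map_add, map_smul, smul_eq_mul]
  calc ω (a * x) = ω (h*x) + Complex.I * ω (k*x) := by
        rw [e, map_add, map_smul, smul_eq_mul]
    _ = (ω h + Complex.I * ω k) * ω x := by rw [Hh x, Hk x]; ring
    _ = ω a * ω x := by rw [ea]
end

section
/- Let A be a quasi-ordered *-algebra and q, r Hermitian elements of A with q r = r q such that both q² and r² are coercive. Then λ q² r² is coercive for every real λ > 0, and there exists a real λ ≥ 1 such that q² + r² ≲ λ q² r². -/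
open ComplexOrder

variable {A : Type*} [Ring A] [Algebra ℂ A] [StarRing A] [StarModule ℂ A]

lemma QOSA.sa_smulR {A : Type*} [Ring A] [Algebra ℂ A] [StarRing A] [StarModule ℂ A]
    (c : ℝ) {a : A} (ha : IsSelfAdjoint a) : IsSelfAdjoint ((c : ℂ) • a) := by
  unfold IsSelfAdjoint
  rw [star_smul, ha.star_eq, Complex.star_def, Complex.conj_ofReal]

lemma QOSA.smul_le {A : Type*} [Ring A] [Algebra ℂ A] [StarRing A] [StarModule ℂ A]
    (𝒜 : QOSA A) {a b : A} (c : ℝ) (hc : 0 ≤ c) (ha : IsSelfAdjoint a)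
    (hb : IsSelfAdjoint b) (h : 𝒜.le a b) : 𝒜.le ((c : ℂ) • a) ((c : ℂ) • b) := by
  have key : ∀ x : A, star ((Real.sqrt c : ℂ) • (1 : A)) * x * ((Real.sqrt c : ℂ) • (1 : A))
      = (c : ℂ) • x := by
    intro x
    rw [star_smul, star_one, Complex.star_def, Complex.conj_ofReal, smul_mul_assoc, one_mul,
      mul_smul_comm, mul_one, smul_smul, ← Complex.ofReal_mul, Real.mul_self_sqrt hc]
  have h2 := 𝒜.conj_le a b ((Real.sqrt c : ℂ) • 1) ha hb h
  rwa [key a, key b] at h2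

lemma QOSA.add_le {A : Type*} [Ring A] [Algebra ℂ A] [StarRing A] [StarModule ℂ A]
    (𝒜 : QOSA A) {a b a' b' : A} (ha : IsSelfAdjoint a) (hb : IsSelfAdjoint b)
    (ha' : IsSelfAdjoint a') (hb' : IsSelfAdjoint b')
    (h : 𝒜.le a b) (h' : 𝒜.le a' b') : 𝒜.le (a + a') (b + b') := by
  have h1 := 𝒜.add_right a b a' ha hb ha' h
  have h2 := 𝒜.add_right a' b' b ha' hb' hb h'
  rw [add_comm a' b, add_comm b' b] at h2
  exact 𝒜.le_trans _ _ _ (ha.add ha') (hb.add ha') (hb.add hb') h1 h2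

/-- products of commuting coercive squares are coercive, and
`q² + r² ≲ λ q² r²` for some `λ ≥ 1`. -/
theorem statement12 {A : Type*} [Ring A] [Algebra ℂ A] [StarRing A] [StarModule ℂ A]
    (𝒜 : QOSA A) (q r : A) (hq : IsSelfAdjoint q) (hr : IsSelfAdjoint r)
    (hcomm : q * r = r * q) (hq2 : 𝒜.Coercive (q ^ 2)) (hr2 : 𝒜.Coercive (r ^ 2)) :
    (∀ c : ℝ, 0 < c → 𝒜.Coercive ((c : ℂ) • (q ^ 2 * r ^ 2))) ∧
    ∃ c : ℝ, 1 ≤ c ∧ 𝒜.le (q ^ 2 + r ^ 2) ((c : ℂ) • (q ^ 2 * r ^ 2)) := by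
  obtain ⟨⟨hq2sa, hq2pos⟩, ε, hε, hεle⟩ := hq2
  obtain ⟨⟨hr2sa, hr2pos⟩, δ, hδ, hδle⟩ := hr2
  have hcomm' : r * q = q * r := hcomm.symm
  have hqr2 : q * r ^ 2 = r ^ 2 * q := by
    rw [sq, ← mul_assoc, hcomm, mul_assoc, hcomm, ← mul_assoc]
  have hrq2 : r * q ^ 2 = q ^ 2 * r := by
    rw [sq, ← mul_assoc, hcomm', mul_assoc, hcomm', ← mul_assoc]
  have hcomm2 : q ^ 2 * r ^ 2 = r ^ 2 * q ^ 2 := by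
    rw [sq q, mul_assoc, hqr2, ← mul_assoc, hqr2, mul_assoc]
  have hs_sa : IsSelfAdjoint (q ^ 2 * r ^ 2) := by
    unfold IsSelfAdjoint
    rw [star_mul, (hr.pow 2).star_eq, (hq.pow 2).star_eq, ← hcomm2]
  have h1sa : IsSelfAdjoint (1 : A) := star_one A
  have h0sa : IsSelfAdjoint (0 : A) := by simp [IsSelfAdjoint]
  -- δ • q² ≲ q² r²
  have step1 : 𝒜.le ((δ : ℂ) • q ^ 2) (q ^ 2 * r ^ 2) := by
    have h := 𝒜.conj_le _ _ q (QOSA.sa_smulR δ h1sa) hr2sa hδle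
    rw [hq.star_eq, mul_smul_comm, smul_mul_assoc, mul_one, ← sq] at h
    rw [hqr2, mul_assoc, ← sq, ← hcomm2] at h
    exact h
  -- ε • r² ≲ q² r²
  have step2 : 𝒜.le ((ε : ℂ) • r ^ 2) (q ^ 2 * r ^ 2) := by
    have h := 𝒜.conj_le _ _ r (QOSA.sa_smulR ε h1sa) hq2sa hεle
    rw [hr.star_eq, mul_smul_comm, smul_mul_assoc, mul_one, ← sq] at h
    rw [hrq2, mul_assoc, ← sq] at h
    exact h
  -- (ε*δ) • 1 ≲ q² r²
  have hεδ : 𝒜.le ((↑(δ * ε) : ℂ) • (1 : A)) (q ^ 2 * r ^ 2) := by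
    have h := 𝒜.smul_le δ hδ.le (QOSA.sa_smulR ε h1sa) hq2sa hεle
    rw [smul_smul, ← Complex.ofReal_mul] at h
    have h' : 𝒜.le ((δ : ℂ) • q ^ 2) (q ^ 2 * r ^ 2) := step1
    exact 𝒜.le_trans _ _ _ (QOSA.sa_smulR _ h1sa) (QOSA.sa_smulR _ (hq.pow 2)) hs_sa h h'
  have hδεpos : 0 < δ * ε := mul_pos hδ hε
  have hs_pos : 𝒜.le 0 (q ^ 2 * r ^ 2) := by
    have h0 : 𝒜.le 0 ((↑(δ * ε) : ℂ) • (1 : A)) := by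
      have := 𝒜.smul_le (δ * ε) hδεpos.le h0sa h1sa 𝒜.zero_le_one
      rwa [smul_zero] at this
    exact 𝒜.le_trans _ _ _ h0sa (QOSA.sa_smulR _ h1sa) hs_sa h0 hεδ
  constructor
  · intro c hc
    refine ⟨⟨QOSA.sa_smulR c hs_sa, ?_⟩, c * (δ * ε), mul_pos hc hδεpos, ?_⟩
    · have := 𝒜.smul_le c hc.le h0sa hs_sa hs_pos
      rwa [smul_zero] at this
    · have h := 𝒜.smul_le c hc.le (QOSA.sa_smulR _ h1sa) hs_sa hεδ
      rwa [smul_smul, ← Complex.ofReal_mul] at h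
  · refine ⟨max 1 (1 / δ + 1 / ε), le_max_left _ _, ?_⟩
    have hq2le : 𝒜.le (q ^ 2) ((↑(1 / δ) : ℂ) • (q ^ 2 * r ^ 2)) := by
      have h := 𝒜.smul_le (1 / δ) (by positivity) (QOSA.sa_smulR _ (hq.pow 2)) hs_sa step1
      rwa [smul_smul, ← Complex.ofReal_mul, one_div_mul_cancel hδ.ne',
        Complex.ofReal_one, one_smul] at h
    have hr2le : 𝒜.le (r ^ 2) ((↑(1 / ε) : ℂ) • (q ^ 2 * r ^ 2)) := by
      have h := 𝒜.smul_le (1 / ε) (by positivity) (QOSA.sa_smulR _ (hr.pow 2)) hs_sa step2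
      rwa [smul_smul, ← Complex.ofReal_mul, one_div_mul_cancel hε.ne',
        Complex.ofReal_one, one_smul] at h
    have hsum : 𝒜.le (q ^ 2 + r ^ 2) ((↑(1 / δ + 1 / ε) : ℂ) • (q ^ 2 * r ^ 2)) := by
      have h := 𝒜.add_le (hq.pow 2) (QOSA.sa_smulR _ hs_sa) (hr.pow 2)
        (QOSA.sa_smulR _ hs_sa) hq2le hr2le
      rwa [← add_smul, ← Complex.ofReal_add] at h
    have hpad : 𝒜.le ((↑(1 / δ + 1 / ε) : ℂ) • (q ^ 2 * r ^ 2))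
        ((↑(max 1 (1 / δ + 1 / ε)) : ℂ) • (q ^ 2 * r ^ 2)) := by
      set μ := 1 / δ + 1 / ε with hμ
      set lam := max 1 (1 / δ + 1 / ε) with hlam
      have hμlam : μ ≤ lam := le_max_right _ _
      have h0 : 𝒜.le 0 ((↑(lam - μ) : ℂ) • (q ^ 2 * r ^ 2)) := by
        have := 𝒜.smul_le (lam - μ) (by linarith) h0sa hs_sa hs_pos
        rwa [smul_zero] at this
      have h := 𝒜.add_right _ _ ((↑μ : ℂ) • (q ^ 2 * r ^ 2)) h0sa
        (QOSA.sa_smulR _ hs_sa) (QOSA.sa_smulR _ hs_sa) h0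
      rwa [zero_add, ← add_smul, ← Complex.ofReal_add, sub_add_cancel] at h
    exact 𝒜.le_trans _ _ _ ((hq.pow 2).add (hr.pow 2)) (QOSA.sa_smulR _ hs_sa)
      (QOSA.sa_smulR _ hs_sa) hsum hpad
end
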